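/- arXiv:hep-th/0301088 — 6 statements merged into one kernel-verified Lean document; each statement's English description precedes it below -/
import Mathlib

section
/- The series of reciprocal central binomial coefficients satisfies: the sum over k from 1 to infinity of 4^k / (k^2 * binom(2k, k)) equals pi^2/2. (This is the summation of the even-intermediate-state contributions Gamma^2(k)/Gamma(2k+1) * 4^k arising in the short-distance dimension of the order/disorder field of the scaling Ising model.) -/
/-!
Integrating `(1 - u²)^(k+1)` by parts gives the Wallis-type integral
`∫₀¹ (1 - u²)^k du = 4^k / ((2k+1) binom(2k,k))`, so the `k`-th term of the series is
`∫₀¹ 2 (1 - u²)^k / (k+1) du`. All terms are nonnegative, so summation and integration commute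
(Tonelli), and the logarithmic series turns the sum into `∫₀¹ -4 log u / (1 - u²) du`.
Expanding `1 / (1 - u²)` geometrically and using `∫₀¹ u^m (-log u) du = 1/(m+1)²` turns this
integral into `4 ∑ₙ 1/(2n+1)² = 4 · π²/8`, the odd part of `ζ(2) = π²/6`.
-/

open scoped Real
open MeasureTheory Real Set

lemma setLIntegral_ofReal_eq_tsum_of_hasSum {α : Type*} [MeasurableSpace α] {μ : Measure α}
    {s : Set α} (hs : MeasurableSet s) {f : ℕ → α → ℝ} {F : α → ℝ}
    (hf : ∀ n, AEMeasurable (f n) (μ.restrict s)) (hf0 : ∀ x ∈ s, ∀ n, 0 ≤ f n x)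
    (hF : ∀ x ∈ s, HasSum (f · x) (F x)) :
    ∫⁻ x in s, ENNReal.ofReal (F x) ∂μ = ∑' n, ∫⁻ x in s, ENNReal.ofReal (f n x) ∂μ := by
  rw [← lintegral_tsum fun n => (hf n).ennreal_ofReal]
  refine setLIntegral_congr_fun hs fun x hx => ?_
  rw [← ENNReal.ofReal_tsum_of_nonneg (hf0 x hx) (hF x hx).summable, (hF x hx).tsum_eq]

lemma setLIntegral_Ioo_ofReal_eq_intervalIntegral {f : ℝ → ℝ} {a b : ℝ} (hab : a ≤ b)
    (hf : IntervalIntegrable f volume a b) (hf0 : ∀ x ∈ Ioo a b, 0 ≤ f x) :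
    ∫⁻ x in Ioo a b, ENNReal.ofReal (f x) = ENNReal.ofReal (∫ x in a..b, f x) := by
  rw [intervalIntegral.integral_of_le hab, integral_Ioc_eq_integral_Ioo,
    ofReal_integral_eq_lintegral_ofReal]
  · exact ((intervalIntegrable_iff_integrableOn_Ioo_of_le hab).mp hf)
  · exact ae_restrict_of_forall_mem measurableSet_Ioo hf0

lemma tsum_eq_of_tsum_ofReal_eq {ι : Type*} {f : ι → ℝ} (hf : ∀ i, 0 ≤ f i) {s : ℝ} (hs : 0 ≤ s)
    (h : ∑' i, ENNReal.ofReal (f i) = ENNReal.ofReal s) : ∑' i, f i = s := by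
  have := ENNReal.tsum_toReal_eq (f := fun i => ENNReal.ofReal (f i)) fun _ => ENNReal.ofReal_ne_top
  simpa only [h, ENNReal.toReal_ofReal hs, ENNReal.toReal_ofReal (hf _)] using this.symm

lemma hasDerivAt_mul_one_sub_sq_pow_succ (k : ℕ) (x : ℝ) :
    HasDerivAt (fun x : ℝ => x * (1 - x ^ 2) ^ (k + 1))
      ((2 * k + 3) * (1 - x ^ 2) ^ (k + 1) - (2 * k + 2) * (1 - x ^ 2) ^ k) x := by
  have h := (hasDerivAt_id x).mul (((hasDerivAt_pow 2 x).const_sub 1).fun_pow (k + 1))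
  refine h.congr_deriv ?_
  simp only [id_eq, Nat.add_sub_cancel]
  push_cast
  ring

lemma integral_one_sub_sq_pow_succ (k : ℕ) :
    ∫ x in (0 : ℝ)..1, (1 - x ^ 2) ^ (k + 1) =
      (2 * (k : ℝ) + 2) / (2 * k + 3) * ∫ x in (0 : ℝ)..1, (1 - x ^ 2) ^ k := by
  have hint : ∀ m : ℕ, IntervalIntegrable (fun x : ℝ => (1 - x ^ 2) ^ m) volume 0 1 :=
    fun m => (by fun_prop : Continuous fun x : ℝ => (1 - x ^ 2) ^ m).intervalIntegrable _ _
  -- the boundary term `x (1 - x²)^(k+1)` vanishes at both ends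
  have h := intervalIntegral.integral_eq_sub_of_hasDerivAt
    (fun x _ => hasDerivAt_mul_one_sub_sq_pow_succ k x)
    (((hint _).const_mul _).sub ((hint _).const_mul _))
  rw [intervalIntegral.integral_sub ((hint _).const_mul _) ((hint _).const_mul _),
    intervalIntegral.integral_const_mul, intervalIntegral.integral_const_mul] at h
  norm_num at h
  field_simp
  linarith

lemma integral_one_sub_sq_pow (k : ℕ) :
    ∫ x in (0 : ℝ)..1, (1 - x ^ 2) ^ k = (4 : ℝ) ^ k / ((2 * k + 1) * Nat.centralBinom k) := by
  induction k with
  | zero => norm_num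
  | succ k ih =>
    have hC : (Nat.centralBinom (k + 1) : ℝ) = 2 * (2 * k + 1) * Nat.centralBinom k / (k + 1) := by
      rw [eq_div_iff (by positivity), mul_comm]
      exact_mod_cast Nat.succ_mul_centralBinom_succ k
    have hpos : (0 : ℝ) < Nat.centralBinom k := by exact_mod_cast Nat.centralBinom_pos k
    rw [integral_one_sub_sq_pow_succ, ih, hC]
    push_cast
    field_simp
    ring

lemma four_pow_succ_div_sq_mul_centralBinom_succ (k : ℕ) :
    (4 : ℝ) ^ (k + 1) / (((k : ℝ) + 1) ^ 2 * Nat.centralBinom (k + 1)) =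
      2 * ((∫ x in (0 : ℝ)..1, (1 - x ^ 2) ^ k) / (k + 1)) := by
  have hC : ((k : ℝ) + 1) * Nat.centralBinom (k + 1) = 2 * (2 * k + 1) * Nat.centralBinom k := by
    exact_mod_cast Nat.succ_mul_centralBinom_succ k
  have hpos : (0 : ℝ) < Nat.centralBinom k := by exact_mod_cast Nat.centralBinom_pos k
  rw [integral_one_sub_sq_pow, sq, mul_assoc, hC]
  field_simp
  ring

lemma intervalIntegrable_pow_mul_neg_log (m : ℕ) (a b : ℝ) :
    IntervalIntegrable (fun x : ℝ => x ^ m * -log x) volume a b :=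
  (intervalIntegral.intervalIntegrable_log' (a := a) (b := b)).neg.continuousOn_mul
    (continuous_pow m).continuousOn

lemma integral_pow_mul_neg_log (m : ℕ) :
    ∫ x in (0 : ℝ)..1, x ^ m * -log x = 1 / ((m : ℝ) + 1) ^ 2 := by
  set F : ℝ → ℝ := fun x => (x ^ (m + 1) - (m + 1) * (x ^ (m + 1) * log x)) / ((m : ℝ) + 1) ^ 2
  -- `x ^ (m + 1) * log x = x ^ m * (x * log x)` extends continuously by `0` at `x = 0`
  have hF : Continuous F := by
    have : F = fun x => (x ^ (m + 1) - (m + 1) * (x ^ m * (x * log x))) / ((m : ℝ) + 1) ^ 2 := by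
      funext x; ring
    rw [this]
    fun_prop
  have hF' : ∀ x ∈ Ioo (0 : ℝ) 1, HasDerivAt F (x ^ m * -log x) x := by
    intro x hx
    have h := (((hasDerivAt_pow (m + 1) x).sub (((hasDerivAt_pow (m + 1) x).mul
      (hasDerivAt_log hx.1.ne')).const_mul ((m : ℝ) + 1)))).div_const (((m : ℝ) + 1) ^ 2)
    refine h.congr_deriv ?_
    simp only [Nat.add_sub_cancel]
    push_cast
    field_simp [hx.1.ne']
    ring
  rw [intervalIntegral.integral_eq_sub_of_hasDerivAt_of_le zero_le_one hF.continuousOn hF'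
    (intervalIntegrable_pow_mul_neg_log m 0 1)]
  simp [F]

lemma hasSum_pow_div_succ {y : ℝ} (hy : |y| < 1) (hy0 : y ≠ 0) :
    HasSum (fun k : ℕ => y ^ k / (k + 1)) (-log (1 - y) / y) :=
  ((hasSum_pow_div_log_of_abs_lt_one hy).div_const y).congr_fun fun k => by
    field_simp
    ring

lemma hasSum_two_mul_one_sub_sq_pow_div_succ {u : ℝ} (hu0 : u ≠ 0) (hu : |u| < 1) :
    HasSum (fun k : ℕ => 2 * ((1 - u ^ 2) ^ k / (k + 1))) (4 * (-log u / (1 - u ^ 2))) := by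
  have hu2 : u ^ 2 < 1 := (sq_lt_one_iff_abs_lt_one u).2 hu
  have hy : |1 - u ^ 2| < 1 := by rw [abs_lt]; constructor <;> nlinarith [sq_pos_of_ne_zero hu0]
  rw [show 4 * (-log u / (1 - u ^ 2)) = 2 * (-log (1 - (1 - u ^ 2)) / (1 - u ^ 2)) by
    rw [sub_sub_cancel, log_pow]; push_cast; ring]
  exact (hasSum_pow_div_succ hy (by linarith)).mul_left 2

lemma hasSum_four_mul_pow_two_mul_mul_neg_log {u : ℝ} (hu : |u| < 1) :
    HasSum (fun n : ℕ => 4 * (u ^ (2 * n) * -log u)) (4 * (-log u / (1 - u ^ 2))) := by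
  have h := hasSum_geometric_of_lt_one (sq_nonneg u) ((sq_lt_one_iff_abs_lt_one u).2 hu)
  simpa only [← div_eq_inv_mul, ← pow_mul] using (h.mul_right (-log u)).mul_left 4

lemma hasSum_one_div_two_mul_add_one_sq :
    HasSum (fun n : ℕ => 1 / (2 * (n : ℝ) + 1) ^ 2) (π ^ 2 / 8) := by
  have hodd : Summable (fun n : ℕ => 1 / ((2 * n + 1 : ℕ) : ℝ) ^ 2) :=
    hasSum_zeta_two.summable.comp_injective (i := fun n : ℕ => 2 * n + 1) fun a b h => by
      simp only at h; omega
  have heven : HasSum (fun n : ℕ => 1 / ((2 * n : ℕ) : ℝ) ^ 2) (π ^ 2 / 24) := by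
    rw [show π ^ 2 / 24 = 1 / 4 * (π ^ 2 / 6) by ring]
    exact (hasSum_zeta_two.mul_left (1 / 4)).congr_fun fun n => by push_cast; ring
  have h := hasSum_zeta_two.unique
    (heven.even_add_odd (f := fun n : ℕ => 1 / (n : ℝ) ^ 2) hodd.hasSum)
  rw [show π ^ 2 / 8 = ∑' n : ℕ, 1 / ((2 * n + 1 : ℕ) : ℝ) ^ 2 by linarith]
  exact hodd.hasSum.congr_fun fun n => by push_cast; ring

lemma two_mul_one_sub_sq_pow_div_succ_nonneg {u : ℝ} (hu : |u| ≤ 1) (k : ℕ) :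
    0 ≤ 2 * ((1 - u ^ 2) ^ k / (k + 1)) := by
  have := pow_nonneg (sub_nonneg.2 ((sq_le_one_iff_abs_le_one u).2 hu)) k
  positivity

lemma four_mul_pow_two_mul_mul_neg_log_nonneg {u : ℝ} (h0 : 0 ≤ u) (h1 : u ≤ 1) (n : ℕ) :
    0 ≤ 4 * (u ^ (2 * n) * -log u) := by
  have := pow_nonneg h0 (2 * n)
  have := neg_nonneg.2 (log_nonpos h0 h1)
  positivity

lemma setLIntegral_two_mul_one_sub_sq_pow_div_succ (k : ℕ) :
    ∫⁻ u in Ioo (0 : ℝ) 1, ENNReal.ofReal (2 * ((1 - u ^ 2) ^ k / (k + 1))) =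
      ENNReal.ofReal ((4 : ℝ) ^ (k + 1) / (((k : ℝ) + 1) ^ 2 * Nat.centralBinom (k + 1))) := by
  rw [setLIntegral_Ioo_ofReal_eq_intervalIntegral zero_le_one
    (Continuous.intervalIntegrable (by fun_prop) _ _)
    fun u hu => two_mul_one_sub_sq_pow_div_succ_nonneg (abs_le.2 ⟨by linarith [hu.1], hu.2.le⟩) k,
    intervalIntegral.integral_const_mul, intervalIntegral.integral_div,
    four_pow_succ_div_sq_mul_centralBinom_succ]

lemma setLIntegral_four_mul_pow_two_mul_mul_neg_log (n : ℕ) :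
    ∫⁻ u in Ioo (0 : ℝ) 1, ENNReal.ofReal (4 * (u ^ (2 * n) * -log u)) =
      ENNReal.ofReal (4 * (1 / (2 * (n : ℝ) + 1) ^ 2)) := by
  rw [setLIntegral_Ioo_ofReal_eq_intervalIntegral zero_le_one
    ((intervalIntegrable_pow_mul_neg_log _ _ _).const_mul 4)
    fun u hu => four_mul_pow_two_mul_mul_neg_log_nonneg hu.1.le hu.2.le n,
    intervalIntegral.integral_const_mul, integral_pow_mul_neg_log]
  push_cast
  ring_nf

/-- The sum of the even-intermediate-state contributions in the short-distance
dimension of the order/disorder field of the scaling Ising model: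
`∑_{k≥1} 4^k / (k² binom(2k,k)) = π²/2`. -/
theorem ising_even_sum :
    ∑' k : ℕ, (4 : ℝ) ^ (k + 1) / (((k : ℝ) + 1) ^ 2 * Nat.centralBinom (k + 1)) = π ^ 2 / 2 := by
  have habs : ∀ u ∈ Ioo (0 : ℝ) 1, |u| < 1 := fun u hu => abs_lt.2 ⟨by linarith [hu.1], hu.2⟩
  have hodd := hasSum_one_div_two_mul_add_one_sq.mul_left 4
  refine tsum_eq_of_tsum_ofReal_eq (fun k => by positivity) (by positivity) ?_
  calc ∑' k : ℕ, ENNReal.ofReal ((4 : ℝ) ^ (k + 1) / (((k : ℝ) + 1) ^ 2 * Nat.centralBinom (k + 1)))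
      = ∑' k : ℕ, ∫⁻ u in Ioo (0 : ℝ) 1, ENNReal.ofReal (2 * ((1 - u ^ 2) ^ k / (k + 1))) :=
        tsum_congr fun k => (setLIntegral_two_mul_one_sub_sq_pow_div_succ k).symm
    _ = ∫⁻ u in Ioo (0 : ℝ) 1, ENNReal.ofReal (4 * (-log u / (1 - u ^ 2))) :=
        (setLIntegral_ofReal_eq_tsum_of_hasSum measurableSet_Ioo (fun k => by fun_prop)
          (fun u hu => two_mul_one_sub_sq_pow_div_succ_nonneg (habs u hu).le)
          fun u hu => hasSum_two_mul_one_sub_sq_pow_div_succ hu.1.ne' (habs u hu)).symm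
    _ = ∑' n : ℕ, ∫⁻ u in Ioo (0 : ℝ) 1, ENNReal.ofReal (4 * (u ^ (2 * n) * -log u)) :=
        setLIntegral_ofReal_eq_tsum_of_hasSum measurableSet_Ioo (fun n => by fun_prop)
          (fun u hu => four_mul_pow_two_mul_mul_neg_log_nonneg hu.1.le hu.2.le)
          fun u hu => hasSum_four_mul_pow_two_mul_mul_neg_log (habs u hu)
    _ = ∑' n : ℕ, ENNReal.ofReal (4 * (1 / (2 * (n : ℝ) + 1) ^ 2)) :=
        tsum_congr setLIntegral_four_mul_pow_two_mul_mul_neg_log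
    _ = ENNReal.ofReal (π ^ 2 / 2) := by
        rw [← ENNReal.ofReal_tsum_of_nonneg (fun n => by positivity) hodd.summable, hodd.tsum_eq]
        ring_nf
end

section
/- The anomalous dimension of the order/disorder field of the scaling Ising model equals 1/16: (1/(4*pi)) * (sum over k >= 0 of binom(2k,k)/((2k+1)*4^k)) - (1/(8*pi^2)) * (sum over k >= 1 of 4^k/(k^2*binom(2k,k))) = 1/8 - 1/16 = 1/16. -/
/-!
Write `a k = (2k choose k) / 4 ^ k`. The binomial series gives `∑ a k y ^ k = (1 - y) ^ (-1/2)`,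
so integrating along `y = x ^ 2` gives `∑ a k x ^ (2k+1) / (2k+1) = arcsin x`. The odd series
`p x = ∑ x ^ (2k+1) / ((k+1) a (k+1))` solves `(1 - x²) p' = 2 + x p` with `p 0 = 0`, hence
`p x = 2 arcsin x / √(1 - x²)`, and its primitive `∑ x ^ (2k+2) / ((k+1)² a (k+1))` is
`2 arcsin² x`. All coefficients are nonnegative, so letting `x → 1⁻` evaluates the two sums
as `π / 2` and `π² / 2`.
-/

open scoped Real
open Filter Topology Set Function

section PowerSeries

variable {c : ℕ → ℝ} {n : ℕ → ℕ} {M : ℝ}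

lemma summable_natCast_mul_pow_sub_one {x : ℝ} (hx : |x| < 1) :
    Summable (fun m : ℕ => (m : ℝ) * x ^ (m - 1)) := by
  refine (summable_nat_add_iff 1).mp ?_
  have h := summable_pow_mul_geometric_of_norm_lt_one 1 (r := x) (by rwa [Real.norm_eq_abs])
  refine (h.add (summable_geometric_of_abs_lt_one hx)).congr fun m => ?_
  simp only [pow_one, Nat.cast_add, Nat.cast_one, add_tsub_cancel_right]
  ring

lemma summable_mul_pow_comp (hc : ∀ k, |c k| ≤ M) (hn : Injective n) {x : ℝ} (hx : |x| < 1) :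
    Summable (fun k => c k * x ^ n k) := by
  refine .of_norm_bounded
    (((summable_geometric_of_abs_lt_one (by rwa [abs_abs])).comp_injective hn).mul_left M)
    fun k => ?_
  rw [Real.norm_eq_abs, abs_mul, abs_pow]
  exact mul_le_mul_of_nonneg_right (hc k) (by positivity)

lemma abs_mul_natCast_mul_pow_sub_one_le (hc : ∀ k, |c k| ≤ M) (k : ℕ) {x r : ℝ}
    (hxr : |x| ≤ r) : |c k * n k * x ^ (n k - 1)| ≤ M * (n k * r ^ (n k - 1)) := by
  rw [mul_assoc, abs_mul, abs_mul, abs_pow, Nat.abs_cast]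
  exact mul_le_mul (hc k) (by gcongr) (by positivity) ((abs_nonneg _).trans (hc k))

lemma hasDerivAt_tsum_mul_pow_comp (hc : ∀ k, |c k| ≤ M) (hn : Injective n) {x : ℝ}
    (hx : |x| < 1) :
    HasDerivAt (fun y => ∑' k, c k * y ^ n k) (∑' k, c k * n k * x ^ (n k - 1)) x := by
  obtain ⟨r, hxr, hr⟩ := exists_between hx
  have hu : Summable (fun k => M * (n k * r ^ (n k - 1))) :=
    ((summable_natCast_mul_pow_sub_one (abs_lt.mpr ⟨by linarith [abs_nonneg x], hr⟩)
      ).comp_injective hn).mul_left M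
  have hxt : x ∈ Ioo (-r) r := abs_lt.mp hxr
  refine hasDerivAt_tsum_of_isPreconnected (t := Ioo (-r) r) (g := fun k y => c k * y ^ n k)
    (g' := fun k y => c k * n k * y ^ (n k - 1)) hu isOpen_Ioo isPreconnected_Ioo
    (fun k y _ => ?_) (fun k y hy => ?_) hxt (summable_mul_pow_comp hc hn hx) hxt
  · simpa [mul_assoc] using (hasDerivAt_pow (n k) y).const_mul (c k)
  · exact abs_mul_natCast_mul_pow_sub_one_le hc k (abs_lt.mpr hy).le

lemma summable_mul_natCast_mul_pow_sub_one (hc : ∀ k, |c k| ≤ M) (hn : Injective n) {x : ℝ}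
    (hx : |x| < 1) : Summable (fun k => c k * n k * x ^ (n k - 1)) :=
  .of_norm_bounded (((summable_natCast_mul_pow_sub_one (by rwa [abs_abs])).comp_injective
    hn).mul_left M) fun k => abs_mul_natCast_mul_pow_sub_one_le hc k le_rfl

/-- Abel's theorem for nonnegative coefficients, where convergence at `1` need not be assumed. -/
lemma hasSum_of_hasSum_mul_pow_of_tendsto (hc : ∀ k, 0 ≤ c k) {f : ℝ → ℝ} {L : ℝ}
    (hf : ∀ x ∈ Ioo (0 : ℝ) 1, HasSum (fun k => c k * x ^ n k) (f x))
    (hL : Tendsto f (𝓝[<] 1) (𝓝 L)) : HasSum c L := by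
  have hmem : Ioo (0 : ℝ) 1 ∈ 𝓝[<] 1 := Ioo_mem_nhdsLT (by norm_num)
  have hpartial : ∀ N, ∑ k ∈ Finset.range N, c k ≤ L := fun N => by
    have hcont : Tendsto (fun x : ℝ => ∑ k ∈ Finset.range N, c k * x ^ n k) (𝓝[<] 1)
        (𝓝 (∑ k ∈ Finset.range N, c k)) := by
      have hcont : Continuous (fun x : ℝ => ∑ k ∈ Finset.range N, c k * x ^ n k) := by fun_prop
      simpa using (hcont.tendsto 1).mono_left nhdsWithin_le_nhds
    refine le_of_tendsto_of_tendsto hcont hL (eventually_of_mem hmem fun x hx => ?_)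
    exact sum_le_hasSum _ (fun k _ => mul_nonneg (hc k) (pow_nonneg hx.1.le _)) (hf x hx)
  have hsum : Summable c := summable_of_sum_range_le hc hpartial
  have hle : L ≤ ∑' k, c k := le_of_tendsto hL (eventually_of_mem hmem fun x hx =>
    hasSum_le (fun k => mul_le_of_le_one_right (hc k) (pow_le_one₀ hx.1.le hx.2.le))
      (hf x hx) hsum.hasSum)
  exact le_antisymm (Real.tsum_le_of_sum_range_le hc hpartial) hle ▸ hsum.hasSum

lemma eqOn_of_hasDerivAt_of_isPreconnected {s : Set ℝ} (hs : IsOpen s) (hs' : IsPreconnected s)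
    {f g f' : ℝ → ℝ} (hf : ∀ x ∈ s, HasDerivAt f (f' x) x) (hg : ∀ x ∈ s, HasDerivAt g (f' x) x)
    {a : ℝ} (ha : a ∈ s) (hfga : f a = g a) : EqOn f g s :=
  hs.eqOn_of_deriv_eq hs' (fun x hx => (hf x hx).differentiableAt.differentiableWithinAt)
    (fun x hx => (hg x hx).differentiableAt.differentiableWithinAt)
    (fun x hx => (hf x hx).deriv.trans (hg x hx).deriv.symm) ha hfga

lemma hasSum_mul_pow_of_hasDerivAt (hc : ∀ k, |c k| ≤ M) (hn : Injective n) (hn0 : ∀ k, n k ≠ 0)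
    {g : ℝ → ℝ} (hg0 : g 0 = 0)
    (hg : ∀ x ∈ Ioo (-1 : ℝ) 1, HasDerivAt g (∑' k, c k * n k * x ^ (n k - 1)) x)
    {x : ℝ} (hx : x ∈ Ioo (-1 : ℝ) 1) : HasSum (fun k => c k * x ^ n k) (g x) := by
  have habs {y : ℝ} (hy : y ∈ Ioo (-1 : ℝ) 1) : |y| < 1 := abs_lt.mpr hy
  have heq := eqOn_of_hasDerivAt_of_isPreconnected isOpen_Ioo isPreconnected_Ioo
    (fun y hy => hasDerivAt_tsum_mul_pow_comp hc hn (habs hy)) hg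
    (⟨by norm_num, by norm_num⟩ : (0 : ℝ) ∈ Ioo (-1) 1) (by simp [hg0, hn0])
  exact heq hx ▸ (summable_mul_pow_comp hc hn (habs hx)).hasSum

end PowerSeries

lemma injective_two_mul_add (b : ℕ) : Injective (fun k : ℕ => 2 * k + b) :=
  fun _ _ h => by simp only at h; omega

noncomputable def centralBinomRatio (k : ℕ) : ℝ := Nat.centralBinom k / 4 ^ k

lemma centralBinomRatio_zero : centralBinomRatio 0 = 1 := by simp [centralBinomRatio]

lemma centralBinomRatio_succ (k : ℕ) :
    centralBinomRatio (k + 1) = centralBinomRatio k * ((2 * k + 1) / (2 * k + 2)) := by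
  have h : ((k : ℝ) + 1) * Nat.centralBinom (k + 1) = 2 * (2 * k + 1) * Nat.centralBinom k := by
    exact_mod_cast Nat.succ_mul_centralBinom_succ k
  simp only [centralBinomRatio, pow_succ]
  field_simp
  linear_combination 2 * h

lemma centralBinomRatio_pos (k : ℕ) : 0 < centralBinomRatio k := by
  unfold centralBinomRatio; have := Nat.centralBinom_pos k; positivity

lemma centralBinomRatio_le_one (k : ℕ) : centralBinomRatio k ≤ 1 := by
  induction k with
  | zero => rw [centralBinomRatio_zero]
  | succ k ih =>
    rw [centralBinomRatio_succ]
    exact mul_le_one₀ ih (by positivity) ((div_le_one (by positivity)).mpr (by linarith))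

open Polynomial in
lemma Ring.multichoose_one_half (k : ℕ) :
    Ring.multichoose (1 / 2 : ℝ) k = centralBinomRatio k := by
  induction k with
  | zero => simp [centralBinomRatio_zero]
  | succ k ih =>
    have h := Ring.factorial_nsmul_multichoose_eq_ascPochhammer (1 / 2 : ℝ) (k + 1)
    rw [ascPochhammer_smeval_eq_eval, ascPochhammer_succ_eval, ← ascPochhammer_smeval_eq_eval,
      ← Ring.factorial_nsmul_multichoose_eq_ascPochhammer, ih, Nat.factorial_succ] at h
    have h' : (k + 1) * Ring.multichoose (1 / 2 : ℝ) (k + 1) = centralBinomRatio k * (1 / 2 + k) :=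
      mul_left_cancel₀ (Nat.cast_ne_zero.mpr k.factorial_ne_zero) (by
        simp only [nsmul_eq_mul, Nat.cast_mul, Nat.cast_succ] at h; linear_combination h)
    rw [centralBinomRatio_succ]
    field_simp
    linear_combination 2 * h'

lemma hasSum_centralBinomRatio_mul_pow {y : ℝ} (hy : |y| < 1) :
    HasSum (fun k => centralBinomRatio k * y ^ k) (1 / √(1 - y)) := by
  have h := (Real.one_div_one_sub_rpow_hasFPowerSeriesOnBall_zero (1 / 2)).hasSum
    (y := y) (by simpa [enorm_eq_nnnorm, ← NNReal.coe_lt_one] using hy)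
  simp only [FormalMultilinearSeries.ofScalars_apply_eq, zero_add, smul_eq_mul,
    ← Ring.multichoose_eq, Ring.multichoose_one_half, ← Real.sqrt_eq_rpow] at h
  exact h

lemma hasSum_arcsin {x : ℝ} (hx : x ∈ Ioo (-1 : ℝ) 1) :
    HasSum (fun k : ℕ => centralBinomRatio k / (2 * k + 1) * x ^ (2 * k + 1)) (Real.arcsin x) := by
  have hc (k : ℕ) : |centralBinomRatio k / (2 * k + 1)| ≤ 1 := by
    rw [abs_of_nonneg (by have := centralBinomRatio_pos k; positivity), div_le_one (by positivity)]
    linarith [centralBinomRatio_le_one k, (k.cast_nonneg : (0 : ℝ) ≤ k)]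
  refine hasSum_mul_pow_of_hasDerivAt hc (injective_two_mul_add 1) (fun k => by omega)
    Real.arcsin_zero (fun y hy => ?_) hx
  have hy2 : |y ^ 2| < 1 := by
    rw [abs_pow]; exact pow_lt_one₀ (abs_nonneg y) (abs_lt.mpr hy) two_ne_zero
  convert Real.hasDerivAt_arcsin hy.1.ne' hy.2.ne using 1
  rw [← (hasSum_centralBinomRatio_mul_pow hy2).tsum_eq]
  refine tsum_congr fun k => ?_
  push_cast
  rw [pow_mul]
  field_simp

lemma tendsto_arcsin_nhdsLT_one : Tendsto Real.arcsin (𝓝[<] 1) (𝓝 (π / 2)) :=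
  Real.arcsin_one ▸ (Real.continuous_arcsin.tendsto 1).mono_left nhdsWithin_le_nhds

lemma hasSum_centralBinomRatio_div :
    HasSum (fun k : ℕ => centralBinomRatio k / (2 * k + 1)) (π / 2) :=
  hasSum_of_hasSum_mul_pow_of_tendsto (fun k => by have := centralBinomRatio_pos k; positivity)
    (fun x hx => hasSum_arcsin ⟨by linarith [hx.1], hx.2⟩) tendsto_arcsin_nhdsLT_one

noncomputable def invCentralBinomRatio (k : ℕ) : ℝ := 1 / ((k + 1) * centralBinomRatio (k + 1))

lemma invCentralBinomRatio_zero : invCentralBinomRatio 0 = 2 := by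
  simp [invCentralBinomRatio, centralBinomRatio_succ, centralBinomRatio_zero]

lemma invCentralBinomRatio_succ (k : ℕ) :
    (2 * k + 3) * invCentralBinomRatio (k + 1) = (2 * k + 2) * invCentralBinomRatio k := by
  have := centralBinomRatio_pos (k + 1)
  simp only [invCentralBinomRatio, centralBinomRatio_succ (k + 1)]
  push_cast
  field_simp
  ring

lemma invCentralBinomRatio_pos (k : ℕ) : 0 < invCentralBinomRatio k := by
  unfold invCentralBinomRatio; have := centralBinomRatio_pos (k + 1); positivity

lemma invCentralBinomRatio_le_two (k : ℕ) : invCentralBinomRatio k ≤ 2 := by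
  induction k with
  | zero => rw [invCentralBinomRatio_zero]
  | succ k ih =>
    have h := invCentralBinomRatio_succ k
    have := invCentralBinomRatio_pos k
    nlinarith

lemma abs_invCentralBinomRatio_le (k : ℕ) : |invCentralBinomRatio k| ≤ 2 :=
  (abs_of_pos (invCentralBinomRatio_pos k)).symm ▸ invCentralBinomRatio_le_two k

lemma one_sub_sq_mul_tsum_invCentralBinomRatio {y : ℝ} (hy : |y| < 1) :
    (1 - y ^ 2) * ∑' k : ℕ, invCentralBinomRatio k * (2 * k + 1) * y ^ (2 * k)
      = 2 + y * ∑' k : ℕ, invCentralBinomRatio k * y ^ (2 * k + 1) := by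
  have hP : Summable (fun k : ℕ => invCentralBinomRatio k * (2 * k + 1) * y ^ (2 * k)) := by
    refine (summable_mul_natCast_mul_pow_sub_one abs_invCentralBinomRatio_le
      (injective_two_mul_add 1) hy).congr fun k => ?_
    push_cast
    rfl
  have hp := summable_mul_pow_comp abs_invCentralBinomRatio_le (injective_two_mul_add 1) hy
  have hshift : ∑' k : ℕ, invCentralBinomRatio k * (2 * k + 1) * y ^ (2 * k)
      = 2 + ∑' k : ℕ, (y ^ 2 * (invCentralBinomRatio k * (2 * k + 1) * y ^ (2 * k))
          + y * (invCentralBinomRatio k * y ^ (2 * k + 1))) := by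
    rw [hP.tsum_eq_zero_add]
    congr 1
    · simp [invCentralBinomRatio_zero]
    · refine tsum_congr fun k => ?_
      push_cast
      linear_combination y ^ (2 * k + 2) * invCentralBinomRatio_succ k
  rw [(hP.mul_left _).tsum_add (hp.mul_left _), tsum_mul_left, tsum_mul_left] at hshift
  linear_combination hshift

lemma hasSum_two_mul_arcsin_div_sqrt {x : ℝ} (hx : x ∈ Ioo (-1 : ℝ) 1) :
    HasSum (fun k : ℕ => invCentralBinomRatio k * x ^ (2 * k + 1))
      (2 * Real.arcsin x / √(1 - x ^ 2)) := by
  set p : ℝ → ℝ := fun y => ∑' k : ℕ, invCentralBinomRatio k * y ^ (2 * k + 1)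
  have hp' {y : ℝ} (hy : |y| < 1) :
      HasDerivAt p (∑' k : ℕ, invCentralBinomRatio k * (2 * k + 1) * y ^ (2 * k)) y := by
    convert hasDerivAt_tsum_mul_pow_comp abs_invCentralBinomRatio_le (injective_two_mul_add 1) hy
      using 1
    refine tsum_congr fun k => ?_
    push_cast
    rfl
  have hpos {y : ℝ} (hy : y ∈ Ioo (-1 : ℝ) 1) : 0 < 1 - y ^ 2 := by nlinarith [hy.1, hy.2]
  have heq := eqOn_of_hasDerivAt_of_isPreconnected isOpen_Ioo isPreconnected_Ioo
    (f := fun y => √(1 - y ^ 2) * p y) (g := fun y => 2 * Real.arcsin y)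
    (f' := fun y => 2 / √(1 - y ^ 2)) (fun y hy => ?_) (fun y hy => ?_)
    (⟨by norm_num, by norm_num⟩ : (0 : ℝ) ∈ Ioo (-1) 1) (by simp [p])
  · have hs : √(1 - x ^ 2) ≠ 0 := (Real.sqrt_pos.mpr (hpos hx)).ne'
    have hpx : p x = 2 * Real.arcsin x / √(1 - x ^ 2) := by
      rw [eq_div_iff hs, mul_comm]; exact heq hx
    exact hpx ▸ (summable_mul_pow_comp abs_invCentralBinomRatio_le (injective_two_mul_add 1)
      (abs_lt.mpr hx)).hasSum
  · have hs := Real.sqrt_pos.mpr (hpos hy)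
    have hsq := Real.sq_sqrt (hpos hy).le
    refine (((hasDerivAt_pow 2 y).const_sub 1).sqrt (hpos hy).ne' |>.mul
      (hp' (abs_lt.mpr hy))).congr_deriv ?_
    have hode := one_sub_sq_mul_tsum_invCentralBinomRatio (abs_lt.mpr hy)
    field_simp
    rw [hsq]
    norm_num
    linear_combination 2 * hode
  · refine ((Real.hasDerivAt_arcsin hy.1.ne' hy.2.ne).const_mul 2).congr_deriv ?_
    ring

lemma hasSum_two_mul_arcsin_sq {x : ℝ} (hx : x ∈ Ioo (-1 : ℝ) 1) :
    HasSum (fun k : ℕ => invCentralBinomRatio k / (k + 1) * x ^ (2 * k + 2))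
      (2 * Real.arcsin x ^ 2) := by
  have hc (k : ℕ) : |invCentralBinomRatio k / (k + 1)| ≤ 2 := by
    have := invCentralBinomRatio_pos k
    rw [abs_of_pos (by positivity), div_le_iff₀ (by positivity)]
    nlinarith [invCentralBinomRatio_le_two k, (k.cast_nonneg : (0 : ℝ) ≤ k)]
  refine hasSum_mul_pow_of_hasDerivAt (g := fun y => 2 * Real.arcsin y ^ 2) hc
    (injective_two_mul_add 2) (fun k => by omega) (by simp) (fun y hy => ?_) hx
  have hderiv : HasSum (fun k : ℕ => invCentralBinomRatio k / (k + 1) * ((2 * k + 2 : ℕ) : ℝ)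
      * y ^ (2 * k + 2 - 1)) (2 * (2 * Real.arcsin y / √(1 - y ^ 2))) := by
    refine ((hasSum_two_mul_arcsin_div_sqrt hy).mul_left 2).congr_fun fun k => ?_
    rw [show 2 * k + 2 - 1 = 2 * k + 1 by omega]
    push_cast
    field_simp
  rw [hderiv.tsum_eq]
  refine (((Real.hasDerivAt_arcsin hy.1.ne' hy.2.ne).pow 2).const_mul 2).congr_deriv ?_
  ring

lemma hasSum_invCentralBinomRatio_div :
    HasSum (fun k : ℕ => invCentralBinomRatio k / (k + 1)) (π ^ 2 / 2) := by
  refine hasSum_of_hasSum_mul_pow_of_tendsto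
    (fun k => by have := invCentralBinomRatio_pos k; positivity)
    (fun x hx => hasSum_two_mul_arcsin_sq ⟨by linarith [hx.1], hx.2⟩) ?_
  convert (tendsto_arcsin_nhdsLT_one.pow 2).const_mul 2 using 2
  ring

/-- The anomalous dimension of the order/disorder field of the scaling Ising model:
`(1/(4π)) ∑_{k≥0} binom(2k,k)/((2k+1)4^k) - (1/(8π²)) ∑_{k≥1} 4^k/(k² binom(2k,k))
  = 1/8 - 1/16 = 1/16`. -/
theorem ising_dimension_eq :
    (1 / (4 * π)) * (∑' k : ℕ, (Nat.centralBinom k : ℝ) / ((2 * k + 1) * 4 ^ k))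
      - (1 / (8 * π ^ 2)) *
        (∑' k : ℕ, (4 : ℝ) ^ (k + 1) / (((k : ℝ) + 1) ^ 2 * Nat.centralBinom (k + 1)))
      = 1 / 16 := by
  have hodd : ∑' k : ℕ, (Nat.centralBinom k : ℝ) / ((2 * k + 1) * 4 ^ k) = π / 2 := by
    rw [← hasSum_centralBinomRatio_div.tsum_eq]
    refine tsum_congr fun k => ?_
    rw [centralBinomRatio, div_div, mul_comm]
  have heven : ∑' k : ℕ, (4 : ℝ) ^ (k + 1) / (((k : ℝ) + 1) ^ 2 * Nat.centralBinom (k + 1))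
      = π ^ 2 / 2 := by
    rw [← hasSum_invCentralBinomRatio_div.tsum_eq]
    refine tsum_congr fun k => ?_
    simp only [invCentralBinomRatio, centralBinomRatio]
    field_simp
  rw [hodd, heven]
  field_simp
  ring
end

section
/- The third Ising intermediate-state integral evaluates to I_3 = double integral over (theta_1, theta_2) in R^2 of { tanh^2((theta_1-theta_2)/2) * tanh^2(theta_1/2) * tanh^2(theta_2/2) - tanh^2((theta_1-theta_2)/2) - tanh^2(theta_1/2) - tanh^2(theta_2/2) + 2 } d theta_1 d theta_2 = 4*pi^2. -/
/-!
The subtraction formula for `tanh`, applied to the half-angles, turns the integrand into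
`(4 / sinh θ₁) (tanh (θ₂ / 2) - tanh ((θ₂ - θ₁) / 2))`: a sigmoid minus its translate by `θ₁`,
whose integral is the translation times the total jump of the sigmoid, `2 θ₁`.
What is left is `∫ 8 θ / sinh θ dθ`; expanding `θ / sinh θ = 2 θ ∑ₙ e^{-(2n+1)θ}` for `θ > 0`
and integrating termwise reduces it to `∑ₙ 1 / (2n+1)² = π² / 8`.
-/

open MeasureTheory Real Set Filter Topology

namespace Real

@[fun_prop]
theorem continuous_tanh : Continuous tanh := by
  simp_rw [funext tanh_eq_sinh_div_cosh]
  exact continuous_sinh.div continuous_cosh fun x => (cosh_pos x).ne'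

theorem tanh_eq_one_sub_div_one_add (x : ℝ) :
    tanh x = (1 - exp (-(2 * x))) / (1 + exp (-(2 * x))) := by
  have h_sq : exp (-(2 * x)) = exp (-x) * exp (-x) := by rw [← exp_add]; ring_nf
  have h_inv : exp x * exp (-x) = 1 := by rw [← exp_add, add_neg_cancel, exp_zero]
  rw [tanh_eq, h_sq, div_eq_div_iff (by positivity) (by positivity)]
  linear_combination 2 * exp (-x) * h_inv

theorem tendsto_tanh_atTop : Tendsto tanh atTop (𝓝 1) := by
  have h : Tendsto (fun x : ℝ => exp (-(2 * x))) atTop (𝓝 0) :=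
    tendsto_exp_neg_atTop_nhds_zero.comp (tendsto_id.const_mul_atTop two_pos)
  have := (h.const_sub 1).div (h.const_add 1) (by norm_num)
  rw [sub_zero, add_zero, div_one] at this
  exact this.congr fun x => (tanh_eq_one_sub_div_one_add x).symm

theorem tendsto_tanh_atBot : Tendsto tanh atBot (𝓝 (-1)) := by
  simpa [Function.comp_def] using (tendsto_tanh_atTop.comp tendsto_neg_atBot_atTop).neg

theorem tanh_sub_tanh (x y : ℝ) : tanh x - tanh y = sinh (x - y) / (cosh x * cosh y) := by
  have := (cosh_pos x).ne'
  have := (cosh_pos y).ne'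
  rw [tanh_eq_sinh_div_cosh, tanh_eq_sinh_div_cosh, sinh_sub]
  field_simp

theorem one_sub_tanh_mul_tanh (x y : ℝ) :
    1 - tanh x * tanh y = cosh (x - y) / (cosh x * cosh y) := by
  have := (cosh_pos x).ne'
  have := (cosh_pos y).ne'
  rw [tanh_eq_sinh_div_cosh, tanh_eq_sinh_div_cosh, cosh_sub]
  field_simp

theorem one_sub_tanh_mul_tanh_pos (x y : ℝ) : 0 < 1 - tanh x * tanh y := by
  rw [one_sub_tanh_mul_tanh]
  exact div_pos (cosh_pos _) (mul_pos (cosh_pos x) (cosh_pos y))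

theorem tanh_sub (x y : ℝ) : tanh (x - y) = (tanh x - tanh y) / (1 - tanh x * tanh y) := by
  rw [tanh_sub_tanh, one_sub_tanh_mul_tanh, div_div_div_cancel_right₀ (by positivity),
    tanh_eq_sinh_div_cosh]

theorem cosh_sub_sinh_mul_tanh (a t : ℝ) : cosh a - sinh a * tanh t = cosh (t - a) / cosh t := by
  have := (cosh_pos t).ne'
  rw [tanh_eq_sinh_div_cosh, cosh_sub]
  field_simp

theorem sinh_two_mul_eq_tanh (x : ℝ) : sinh (2 * x) = 2 * tanh x / (1 - tanh x ^ 2) := by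
  have := (cosh_pos x).ne'
  have h : 1 - tanh x ^ 2 = 1 / cosh x ^ 2 := by
    rw [sq, sq, one_sub_tanh_mul_tanh, sub_self, cosh_zero]
  rw [h, sinh_two_mul, tanh_eq_sinh_div_cosh]
  field_simp

theorem exp_abs_le_two_mul_cosh (x : ℝ) : exp |x| ≤ 2 * cosh x := by
  rw [← cosh_abs, cosh_eq]
  linarith [exp_pos (-|x|)]

end Real

theorem integrable_exp_neg_abs : Integrable fun x : ℝ => exp (-|x|) :=
  Integrable.of_integral_ne_zero <| by
    rw [integral_comp_abs (f := fun x => exp (-x)), integral_exp_neg_Ioi_zero]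
    norm_num

theorem integrable_tanh_sub_tanh_sub (a : ℝ) : Integrable fun t => tanh t - tanh (t - a) := by
  refine (integrable_exp_neg_abs.const_mul (2 * |sinh a|)).mono'
    (by fun_prop : Continuous _).aestronglyMeasurable (.of_forall fun t => ?_)
  have h_decay : 1 ≤ exp (-|t|) * (2 * cosh t) := by
    rw [exp_neg, inv_mul_eq_div, one_le_div (exp_pos _)]
    exact exp_abs_le_two_mul_cosh t
  rw [norm_eq_abs, tanh_sub_tanh, sub_sub_cancel, abs_div,
    abs_of_pos (mul_pos (cosh_pos _) (cosh_pos _))]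
  calc |sinh a| / (cosh t * cosh (t - a)) ≤ |sinh a| / cosh t :=
        div_le_div_of_nonneg_left (abs_nonneg _) (cosh_pos t)
          (le_mul_of_one_le_right (cosh_pos t).le (one_le_cosh _))
    _ ≤ 2 * |sinh a| * exp (-|t|) := by
      rw [div_le_iff₀ (cosh_pos t)]
      nlinarith [abs_nonneg (sinh a)]

theorem integral_tanh_sub_tanh_sub (a : ℝ) : ∫ t, (tanh t - tanh (t - a)) = 2 * a := by
  let F t := log (cosh t) - log (cosh (t - a))
  -- in this form the limits `± a` at `± ∞` can be read off from those of `tanh`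
  have hF : F = fun t => -log (cosh a - sinh a * tanh t) := funext fun t => by
    rw [cosh_sub_sinh_mul_tanh, log_div (cosh_pos _).ne' (cosh_pos _).ne', neg_sub]
  have hF_deriv t : HasDerivAt F (tanh t - tanh (t - a)) t := by
    rw [tanh_eq_sinh_div_cosh, tanh_eq_sinh_div_cosh]
    exact ((hasDerivAt_cosh t).log (cosh_pos t).ne').sub
      (((hasDerivAt_cosh (t - a)).comp_sub_const t a).log (cosh_pos _).ne')
  have hF_top : Tendsto F atTop (𝓝 a) := by
    have h := ((tendsto_tanh_atTop.const_mul (sinh a)).const_sub (cosh a)).log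
      (by rw [mul_one, cosh_sub_sinh]; exact (exp_pos _).ne')
    rw [mul_one, cosh_sub_sinh, log_exp] at h
    simpa [hF] using h.neg
  have hF_bot : Tendsto F atBot (𝓝 (-a)) := by
    have h := ((tendsto_tanh_atBot.const_mul (sinh a)).const_sub (cosh a)).log
      (by rw [mul_neg_one, sub_neg_eq_add, cosh_add_sinh]; exact (exp_pos _).ne')
    rw [mul_neg_one, sub_neg_eq_add, cosh_add_sinh, log_exp] at h
    simpa [hF] using h.neg
  rw [integral_of_hasDerivAt_of_tendsto hF_deriv (integrable_tanh_sub_tanh_sub a) hF_bot hF_top]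
  ring

theorem hasSum_one_div_odd_sq : HasSum (fun n : ℕ => 1 / (2 * n + 1 : ℝ) ^ 2) (π ^ 2 / 8) := by
  let f : ℕ → ℝ := fun n => 1 / (n : ℝ) ^ 2
  have h_odd : Summable fun n => f (2 * n + 1) :=
    hasSum_zeta_two.summable.comp_injective fun m n h => by omega
  have h_even : HasSum (fun n => f (2 * n)) (π ^ 2 / 6 / 4) :=
    (hasSum_zeta_two.div_const 4).congr_fun fun n => by simp only [f]; push_cast; ring
  have h_split := tsum_even_add_odd h_even.summable h_odd
  rw [hasSum_zeta_two.tsum_eq, h_even.tsum_eq] at h_split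
  rw [show π ^ 2 / 8 = ∑' n, f (2 * n + 1) by linarith]
  exact h_odd.hasSum.congr_fun fun n => by simp only [f]; push_cast; rfl

theorem hasSum_mul_exp_neg_odd_mul {x : ℝ} (hx : 0 < x) :
    HasSum (fun n : ℕ => 2 * x * exp (-((2 * n + 1) * x))) (x / sinh x) := by
  have h_ratio : exp (-(2 * x)) < 1 := exp_lt_one_iff.2 (by linarith)
  have h_sum : 2 * x * exp (-x) * (1 - exp (-(2 * x)))⁻¹ = x / sinh x := by
    have h_sinh : sinh x = exp x * (1 - exp (-(2 * x))) / 2 := by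
      rw [sinh_eq, mul_sub, mul_one, ← exp_add]; ring_nf
    have := (sub_pos.2 h_ratio).ne'
    rw [h_sinh, exp_neg]
    field_simp
  rw [← h_sum]
  refine ((hasSum_geometric_of_lt_one (exp_pos _).le h_ratio).mul_left _).congr_fun fun n => ?_
  rw [← exp_nat_mul, mul_assoc (2 * x) (exp (-x)), ← exp_add]
  ring_nf

theorem integral_Ioi_mul_exp_neg_mul {a : ℝ} (ha : 0 < a) :
    ∫ x in Ioi 0, x * exp (-(a * x)) = 1 / a ^ 2 := by
  simpa [Gamma_two, show (2 : ℝ) - 1 = 1 by norm_num] using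
    integral_rpow_mul_exp_neg_mul_Ioi two_pos ha

theorem integral_Ioi_id_div_sinh : ∫ x in Ioi 0, x / sinh x = π ^ 2 / 4 := by
  let F (n : ℕ) (x : ℝ) := 2 * x * exp (-((2 * n + 1) * x))
  have hF_integral n : ∫ x in Ioi 0, F n x = 2 / (2 * n + 1) ^ 2 := by
    simp_rw [F, mul_assoc, integral_const_mul]
    rw [integral_Ioi_mul_exp_neg_mul (by positivity)]
    ring
  have hF_integrable n : IntegrableOn (F n) (Ioi 0) :=
    .of_integral_ne_zero (by rw [hF_integral]; positivity)
  have hF_norm n : ∫ x in Ioi 0, ‖F n x‖ = 2 / (2 * n + 1) ^ 2 := by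
    rw [← hF_integral]
    refine setIntegral_congr_fun measurableSet_Ioi fun x (hx : 0 < x) => norm_of_nonneg ?_
    positivity
  have h_sum : HasSum (fun n : ℕ => 2 / (2 * n + 1 : ℝ) ^ 2) (π ^ 2 / 4) := by
    rw [show π ^ 2 / 4 = 2 * (π ^ 2 / 8) by ring]
    exact (hasSum_one_div_odd_sq.mul_left 2).congr_fun fun n => by ring
  calc ∫ x in Ioi 0, x / sinh x = ∫ x in Ioi 0, ∑' n, F n x :=
        setIntegral_congr_fun measurableSet_Ioi fun x hx =>
          (hasSum_mul_exp_neg_odd_mul hx).tsum_eq.symm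
    _ = ∑' n, ∫ x in Ioi 0, F n x :=
        (integral_tsum_of_summable_integral_norm hF_integrable
          (by simpa only [hF_norm] using h_sum.summable)).symm
    _ = π ^ 2 / 4 := by simpa only [hF_integral] using h_sum.tsum_eq

theorem integral_id_div_sinh : ∫ x, x / sinh x = π ^ 2 / 2 := by
  have h_even : (fun x => x / sinh x) = fun x => |x| / sinh |x| := funext fun x => by
    rcases abs_choice x with h | h <;> rw [h]
    rw [sinh_neg, neg_div_neg_eq]
  rw [h_even, integral_comp_abs (f := fun x => x / sinh x), integral_Ioi_id_div_sinh]
  ring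

/-- The connected three-particle term `h₃(θ₁, θ₂, 0)`. -/
noncomputable def isingH3 (θ₁ θ₂ : ℝ) : ℝ :=
  tanh ((θ₁ - θ₂) / 2) ^ 2 * tanh (θ₁ / 2) ^ 2 * tanh (θ₂ / 2) ^ 2
    - tanh ((θ₁ - θ₂) / 2) ^ 2 - tanh (θ₁ / 2) ^ 2 - tanh (θ₂ / 2) ^ 2 + 2

theorem sinh_mul_isingH3 (θ₁ θ₂ : ℝ) :
    sinh θ₁ * isingH3 θ₁ θ₂ = 4 * (tanh (θ₂ / 2) - tanh (θ₂ / 2 - θ₁ / 2)) := by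
  obtain ⟨a, rfl⟩ : ∃ a, θ₁ = 2 * a := ⟨θ₁ / 2, by ring⟩
  obtain ⟨b, rfl⟩ : ∃ b, θ₂ = 2 * b := ⟨θ₂ / 2, by ring⟩
  have h_half : (2 * a - 2 * b) / 2 = a - b := by ring
  simp only [isingH3, h_half, sinh_two_mul_eq_tanh, tanh_sub]
  have ha : 1 - tanh a ^ 2 ≠ 0 := (sub_pos.2 (tanh_sq_lt_one a)).ne'
  have hab : 1 - tanh a * tanh b ≠ 0 := (one_sub_tanh_mul_tanh_pos a b).ne'
  have hba : 1 - tanh b * tanh a ≠ 0 := (one_sub_tanh_mul_tanh_pos b a).ne'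
  field_simp
  ring

theorem integral_isingH3_of_ne_zero {θ₁ : ℝ} (hθ₁ : θ₁ ≠ 0) :
    ∫ θ₂, isingH3 θ₁ θ₂ = 8 * (θ₁ / sinh θ₁) := by
  have hsinh : sinh θ₁ ≠ 0 := sinh_ne_zero.2 hθ₁
  have h_shift θ₂ : isingH3 θ₁ θ₂ = 4 / sinh θ₁ * (tanh (θ₂ / 2) - tanh (θ₂ / 2 - θ₁ / 2)) := by
    rw [div_mul_eq_mul_div, eq_div_iff hsinh, mul_comm, sinh_mul_isingH3]
  have h_scale := Measure.integral_comp_div (fun t => tanh t - tanh (t - θ₁ / 2)) 2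
  rw [funext h_shift, integral_const_mul, h_scale, integral_tanh_sub_tanh_sub, abs_two,
    smul_eq_mul]
  field_simp
  ring

/-- The third Ising intermediate-state integral:
`I₃ = ∬ { tanh²(θ₁₂/2) tanh²(θ₁/2) tanh²(θ₂/2) - tanh²(θ₁₂/2) - tanh²(θ₁/2)
  - tanh²(θ₂/2) + 2 } dθ₁ dθ₂ = 4π²`. -/
theorem ising_I3 :
    ∫ θ₁ : ℝ, ∫ θ₂ : ℝ,
      (Real.tanh ((θ₁ - θ₂) / 2) ^ 2 * Real.tanh (θ₁ / 2) ^ 2 * Real.tanh (θ₂ / 2) ^ 2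
        - Real.tanh ((θ₁ - θ₂) / 2) ^ 2 - Real.tanh (θ₁ / 2) ^ 2 - Real.tanh (θ₂ / 2) ^ 2 + 2)
      = 4 * π ^ 2 := by
  have h_inner : (fun θ₁ => ∫ θ₂, isingH3 θ₁ θ₂) =ᵐ[volume] fun θ₁ => 8 * (θ₁ / sinh θ₁) := by
    filter_upwards [compl_mem_ae_iff.2 (measure_singleton (0 : ℝ))] with θ₁ hθ₁
    exact integral_isingH3_of_ne_zero hθ₁
  calc ∫ θ₁, ∫ θ₂, isingH3 θ₁ θ₂ = ∫ θ₁, 8 * (θ₁ / sinh θ₁) := integral_congr_ae h_inner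
    _ = 4 * π ^ 2 := by
      rw [integral_const_mul, integral_id_div_sinh]
      ring
end

section
/- Let I : positive integers -> R be defined by I_1 = 1, I_2 = -4, and I_n = (n-2)^2 * 4*pi^2 * I_{n-2} for n >= 3. Then the series sum over n >= 1 of I_n / (n! * (2*pi)^n) converges absolutely and equals 1/8 (so that the dimension Delta = (1/2) * sum = 1/16 for the scaling Ising model). -/
/-!
After normalisation, `aₙ = I_{n+1} / ((n+1)! (2π)^{n+1})` satisfies
`a_{n+2} = (n+1)² / ((n+2)(n+3)) · aₙ`, the same two-step recursion as `wₙ / (n+1)`, where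
`w₀ = w₁ = 1`, `w_{n+2} = (n+1)/(n+2) · wₙ`. Hence `a_{2k} = w_{2k}/(2k+1) / (2π)` and
`a_{2k+1} = -w_{2k+1}/(2k+2) / π²`.

The series `S x = ∑ wₙ xⁿ` solves `(1 - x²) S' = 1 + x S`, so that
`S x · √(1 - x²) = 1 + arcsin x`, and its primitive `∑ wₙ/(n+1) x^{n+1}` equals
`arcsin x + arcsin² x / 2`. The coefficients are positive, so the primitive converges on
`[-1, 1]`; its values at `±1` give `∑ w_{2k}/(2k+1) = π/2` and `∑ w_{2k+1}/(2k+2) = π²/8`,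
whence `∑ aₙ = 1/4 - 1/8`.
-/

open Set Filter Topology Real

/-- `wallis n = ∫₀^{π/2} sinⁿ / ∫₀^{π/2} sin^(n % 2)`. -/
noncomputable def wallis : ℕ → ℝ
  | 0 => 1
  | 1 => 1
  | n + 2 => (n + 1) / (n + 2) * wallis n

namespace wallis

lemma succ_succ_mul (n : ℕ) : (n + 2) * wallis (n + 2) = (n + 1) * wallis n := by
  rw [wallis]; field_simp

lemma pos : ∀ n, 0 < wallis n
  | 0 => by simp [wallis]
  | 1 => by simp [wallis]
  | n + 2 => by rw [wallis]; have := pos n; positivity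

lemma le_one : ∀ n, wallis n ≤ 1
  | 0 => by simp [wallis]
  | 1 => by simp [wallis]
  | n + 2 => by
    rw [wallis]
    exact mul_le_one₀ ((div_le_one (by positivity)).2 (by linarith)) (pos n).le (le_one n)

end wallis

section PowerSeries

variable {c : ℕ → ℝ} {C x : ℝ}

lemma summable_mul_pow_of_abs_le (hc : ∀ n, |c n| ≤ C * (n + 1)) (hx : |x| < 1) :
    Summable fun n => c n * x ^ n := by
  have hgeom : Summable fun n : ℕ => C * ((n : ℝ) ^ 1 * |x| ^ n) + C * |x| ^ n :=
    ((summable_pow_mul_geometric_of_norm_lt_one 1 (by simpa using hx)).mul_left C).add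
      ((summable_geometric_of_lt_one (abs_nonneg x) hx).mul_left C)
  refine .of_norm_bounded hgeom fun n => ?_
  rw [norm_mul, norm_pow, Real.norm_eq_abs, Real.norm_eq_abs]
  calc |c n| * |x| ^ n ≤ C * (n + 1) * |x| ^ n := by gcongr; exact hc n
    _ = _ := by ring

lemma hasDerivAt_tsum_mul_pow_succ (hc : ∀ n, |c n| ≤ C) (hx : |x| < 1) :
    HasDerivAt (fun y => ∑' n, c n * y ^ (n + 1)) (∑' n, c n * (n + 1) * x ^ n) x := by
  obtain ⟨r, hxr, hr⟩ := exists_between hx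
  have hr0 : 0 < r := (abs_nonneg x).trans_lt hxr
  have hC : 0 ≤ C := (abs_nonneg _).trans (hc 0)
  have hmajor : Summable fun n : ℕ => C * (n + 1) * r ^ n :=
    summable_mul_pow_of_abs_le (fun n => by rw [abs_of_nonneg (by positivity)])
      (by rwa [abs_of_pos hr0])
  refine hasDerivAt_tsum_of_isPreconnected (t := Ioo (-r) r) (y₀ := 0)
    (g := fun n y => c n * y ^ (n + 1)) (g' := fun n y => c n * (n + 1) * y ^ n) hmajor
    isOpen_Ioo isPreconnected_Ioo (fun n y _ => ?_) (fun n y hy => ?_) ⟨by linarith, hr0⟩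
    (by simp) ⟨by linarith [neg_abs_le x], by linarith [le_abs_self x]⟩
  · simpa [mul_assoc] using (hasDerivAt_pow (n + 1) y).const_mul (c n)
  · rw [norm_mul, norm_mul, norm_pow, Real.norm_eq_abs, Real.norm_eq_abs, Real.norm_eq_abs,
      abs_of_pos (by positivity : (0 : ℝ) < n + 1)]
    gcongr
    · exact hc n
    · exact (abs_lt.2 hy).le

end PowerSeries

lemma eqOn_of_hasDerivAt {s : Set ℝ} {f g f' : ℝ → ℝ} (hs : IsOpen s)
    (hs' : IsPreconnected s) (hf : ∀ x ∈ s, HasDerivAt f (f' x) x)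
    (hg : ∀ x ∈ s, HasDerivAt g (f' x) x) {x₀ : ℝ} (hx₀ : x₀ ∈ s) (h₀ : f x₀ = g x₀) :
    EqOn f g s :=
  hs.eqOn_of_deriv_eq hs' (fun x hx => (hf x hx).differentiableAt.differentiableWithinAt)
    (fun x hx => (hg x hx).differentiableAt.differentiableWithinAt)
    (fun x hx => by rw [(hf x hx).deriv, (hg x hx).deriv]) hx₀ h₀

noncomputable def wallisSeries (x : ℝ) : ℝ := ∑' n, wallis n * x ^ n

noncomputable def wallisPrimitive (x : ℝ) : ℝ := ∑' n, wallis n / (n + 1) * x ^ (n + 1)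

section OpenInterval

variable {x : ℝ}

lemma abs_wallis_div_le (n : ℕ) : |wallis n / (n + 1)| ≤ 1 := by
  rw [abs_of_pos (by have := wallis.pos n; positivity), div_le_one (by positivity)]
  linarith [wallis.le_one n]

lemma hasDerivAt_wallisPrimitive (hx : |x| < 1) :
    HasDerivAt wallisPrimitive (wallisSeries x) x := by
  refine (hasDerivAt_tsum_mul_pow_succ abs_wallis_div_le hx).congr_deriv (tsum_congr fun n => ?_)
  field_simp

lemma summable_wallis_mul_pow (hx : |x| < 1) : Summable fun n => wallis n * x ^ n :=
  summable_mul_pow_of_abs_le (C := 1) (fun n => by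
    rw [abs_of_pos (wallis.pos n)]; linarith [wallis.le_one n]) hx

lemma wallisSeries_eq_one_add (hx : |x| < 1) :
    wallisSeries x = 1 + ∑' n, wallis (n + 1) * x ^ (n + 1) := by
  rw [wallisSeries, (summable_wallis_mul_pow hx).tsum_eq_zero_add]
  simp [wallis]

lemma hasDerivAt_wallisSeries (hx : |x| < 1) :
    HasDerivAt wallisSeries (∑' n, wallis (n + 1) * (n + 1) * x ^ n) x := by
  have hsucc := (hasDerivAt_tsum_mul_pow_succ (C := 1)
    (fun n => by rw [abs_of_pos (wallis.pos (n + 1))]; exact wallis.le_one (n + 1)) hx).const_add 1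
  refine hsucc.congr_of_eventuallyEq ?_
  filter_upwards [(isOpen_lt continuous_abs continuous_const).mem_nhds hx] with y hy
  exact wallisSeries_eq_one_add hy

lemma one_sub_sq_mul_deriv_wallisSeries (hx : |x| < 1) :
    (1 - x ^ 2) * ∑' n, wallis (n + 1) * (n + 1) * x ^ n = 1 + x * wallisSeries x := by
  set u : ℕ → ℝ := fun n => wallis (n + 1) * (n + 1) * x ^ n
  have hu : Summable u := summable_mul_pow_of_abs_le (C := 1) (fun n => by
    rw [abs_of_pos (by have := wallis.pos (n + 1); positivity)]
    nlinarith [wallis.le_one (n + 1)]) hx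
  have hv : Summable fun n => wallis (n + 1) * x ^ (n + 1) :=
    (summable_nat_add_iff 1).mpr (summable_wallis_mul_pow hx)
  have hshift :
      ∑' n, u (n + 2) = x ^ 2 * ∑' n, u n + x * ∑' n, wallis (n + 1) * x ^ (n + 1) := by
    rw [← tsum_mul_left, ← tsum_mul_left, ← (hu.mul_left _).tsum_add (hv.mul_left _)]
    refine tsum_congr fun n => ?_
    have := wallis.succ_succ_mul (n + 1)
    rw [show n + 1 + 2 = n + 2 + 1 by ring] at this
    simp only [u]; push_cast at this ⊢
    linear_combination x ^ (n + 2) * this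
  have hsplit := hu.sum_add_tsum_nat_add 2
  rw [Finset.sum_range_succ, Finset.sum_range_one, hshift] at hsplit
  have hu01 : u 0 + u 1 = 1 + x := by norm_num [u, wallis]
  rw [wallisSeries_eq_one_add hx]
  linear_combination hu01 - hsplit

lemma wallisSeries_mul_sqrt (hx : x ∈ Ioo (-1) 1) :
    wallisSeries x * √(1 - x ^ 2) = 1 + arcsin x := by
  refine eqOn_of_hasDerivAt (f := fun y => wallisSeries y * √(1 - y ^ 2))
    (g := fun y => 1 + arcsin y) (f' := fun y => 1 / √(1 - y ^ 2)) isOpen_Ioo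
    isPreconnected_Ioo (fun y hy => ?_) (fun y hy => ?_) (x₀ := 0) (by norm_num) ?_ hx
  · have hy' : |y| < 1 := abs_lt.2 hy
    have hpos : 0 < 1 - y ^ 2 := by nlinarith [hy.1, hy.2]
    have hsqrt := ((hasDerivAt_pow 2 y).const_sub 1).sqrt hpos.ne'
    refine ((hasDerivAt_wallisSeries hy').mul hsqrt).congr_deriv ?_
    have hode := one_sub_sq_mul_deriv_wallisSeries hy'
    have hsq := Real.sq_sqrt hpos.le
    have hs := Real.sqrt_pos.2 hpos
    field_simp
    linear_combination 2 * hode + 2 * (∑' n, wallis (n + 1) * (n + 1) * y ^ n) * hsq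
  · exact (hasDerivAt_arcsin hy.1.ne' hy.2.ne).const_add 1
  · simp [wallisSeries_eq_one_add (x := 0) (by norm_num)]

lemma wallisPrimitive_eq_arcsin (hx : x ∈ Ioo (-1) 1) :
    wallisPrimitive x = arcsin x + arcsin x ^ 2 / 2 := by
  refine eqOn_of_hasDerivAt (g := fun y => arcsin y + arcsin y ^ 2 / 2)
    (f' := wallisSeries) isOpen_Ioo isPreconnected_Ioo
    (fun y hy => hasDerivAt_wallisPrimitive (abs_lt.2 hy)) (fun y hy => ?_) (x₀ := 0)
    (by norm_num) (by simp [wallisPrimitive]) hx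
  have harcsin := hasDerivAt_arcsin hy.1.ne' hy.2.ne
  refine (harcsin.add ((harcsin.pow 2).div_const 2)).congr_deriv ?_
  have hs : 0 < √(1 - y ^ 2) := Real.sqrt_pos.2 (by nlinarith [hy.1, hy.2])
  have := wallisSeries_mul_sqrt hy
  field_simp
  linear_combination -2 * this

end OpenInterval

lemma summable_wallis_div : Summable fun n : ℕ => wallis n / (n + 1) := by
  have hnonneg (n : ℕ) : 0 ≤ wallis n / (n + 1) := by have := wallis.pos n; positivity
  refine summable_of_sum_range_le (c := π / 2 + π ^ 2 / 8) hnonneg fun N => ?_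
  have hlim : Tendsto (fun x : ℝ => ∑ n ∈ Finset.range N, wallis n / (n + 1) * x ^ (n + 1))
      (𝓝[<] 1) (𝓝 (∑ n ∈ Finset.range N, wallis n / (n + 1))) := by
    simpa using (((continuous_finsetSum _ fun n _ =>
      (continuous_pow (n + 1)).const_mul (wallis n / (n + 1))).tendsto 1).mono_left
      nhdsWithin_le_nhds)
  refine le_of_tendsto hlim ?_
  filter_upwards [Ioo_mem_nhdsLT (show (0 : ℝ) < 1 by norm_num)] with x hx
  have hsum : Summable fun n => wallis n / (n + 1) * x ^ (n + 1) :=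
    ((summable_mul_pow_of_abs_le (C := 1) (fun n => (abs_wallis_div_le n).trans (by linarith))
      (abs_lt.2 ⟨by linarith [hx.1], hx.2⟩)).mul_right x).congr fun n => by ring
  calc ∑ n ∈ Finset.range N, wallis n / (n + 1) * x ^ (n + 1) ≤ wallisPrimitive x :=
        hsum.sum_le_tsum _ fun n _ => mul_nonneg (hnonneg n) (pow_nonneg hx.1.le _)
    _ = arcsin x + arcsin x ^ 2 / 2 := wallisPrimitive_eq_arcsin ⟨by linarith [hx.1], hx.2⟩
    _ ≤ π / 2 + π ^ 2 / 8 := by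
        nlinarith [arcsin_le_pi_div_two x, neg_pi_div_two_le_arcsin x]

lemma hasSum_wallisPrimitive {x : ℝ} (hx : x ∈ Icc (-1) 1) :
    HasSum (fun n => wallis n / (n + 1) * x ^ (n + 1)) (arcsin x + arcsin x ^ 2 / 2) := by
  have hbound (n : ℕ) (y : ℝ) (hy : y ∈ Icc (-1) 1) :
      ‖wallis n / (n + 1) * y ^ (n + 1)‖ ≤ wallis n / (n + 1) := by
    rw [norm_mul, norm_pow, Real.norm_eq_abs, Real.norm_eq_abs,
      abs_of_pos (by have := wallis.pos n; positivity)]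
    exact mul_le_of_le_one_right (by have := wallis.pos n; positivity)
      (pow_le_one₀ (abs_nonneg y) (abs_le.2 hy))
  have hcont : ContinuousOn wallisPrimitive (Icc (-1) 1) :=
    continuousOn_tsum (fun n => (by fun_prop : Continuous _).continuousOn) summable_wallis_div
      hbound
  have heq : EqOn wallisPrimitive (fun y => arcsin y + arcsin y ^ 2 / 2) (Icc (-1) 1) :=
    EqOn.of_subset_closure (fun y hy => wallisPrimitive_eq_arcsin hy) hcont (by fun_prop)
      Ioo_subset_Icc_self (by rw [closure_Ioo (by norm_num)])
  rw [← show wallisPrimitive x = arcsin x + arcsin x ^ 2 / 2 from heq hx]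
  exact (summable_wallis_div.of_norm_bounded fun n => hbound n x hx).hasSum

lemma HasSum.even_odd_of_neg_one_pow {f : ℕ → ℝ} {s t : ℝ} (hs : HasSum f s)
    (ht : HasSum (fun n => (-1) ^ n * f n) t) :
    HasSum (fun k => f (2 * k)) ((s + t) / 2) ∧
      HasSum (fun k => f (2 * k + 1)) ((s - t) / 2) := by
  have htwo := mul_right_injective₀ (two_ne_zero' ℕ)
  obtain ⟨e, he⟩ : Summable fun k => f (2 * k) := hs.summable.comp_injective htwo
  obtain ⟨o, ho⟩ : Summable fun k => f (2 * k + 1) :=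
    hs.summable.comp_injective ((add_left_injective 1).comp htwo)
  have hse : s = e + o := hs.unique (he.even_add_odd ho)
  have hte : t = e + -o := ht.unique <| HasSum.even_add_odd (by simpa [pow_mul] using he)
    (by simpa [pow_add, pow_mul] using ho.neg)
  exact ⟨by convert he using 1; linarith, by convert ho using 1; linarith⟩

lemma hasSum_wallis_div_even_odd :
    HasSum (fun k => wallis (2 * k) / ((2 * k : ℕ) + 1)) (π / 2) ∧
      HasSum (fun k => wallis (2 * k + 1) / ((2 * k + 1 : ℕ) + 1)) (π ^ 2 / 8) := by
  have hone := hasSum_wallisPrimitive (x := 1) (by norm_num)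
  have hneg := (hasSum_wallisPrimitive (x := -1) (by norm_num)).neg
  simp only [one_pow, mul_one, arcsin_one, arcsin_neg_one] at hone hneg
  have halt : HasSum (fun n : ℕ => (-1) ^ n * (wallis n / (n + 1))) (π / 2 - π ^ 2 / 8) := by
    rw [show π / 2 - π ^ 2 / 8 = -(-(π / 2) + (-(π / 2)) ^ 2 / 2) by ring]
    exact hneg.congr_fun fun n => by rw [pow_succ]; ring
  have := hone.even_odd_of_neg_one_pow halt
  exact ⟨by convert this.1 using 1; ring, by convert this.2 using 1; ring⟩

lemma mul_eq_mul_of_two_step {f g r : ℕ → ℝ} (hf : ∀ n, f (n + 2) = r n * f n)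
    (hg : ∀ n, g (n + 2) = r n * g n) (j : ℕ) :
    ∀ k, f (2 * k + j) * g j = g (2 * k + j) * f j
  | 0 => by simp [mul_comm]
  | k + 1 => by
    rw [show 2 * (k + 1) + j = 2 * k + j + 2 by ring, hf, hg]
    linear_combination r (2 * k + j) * mul_eq_mul_of_two_step hf hg j k

lemma wallis_div_two_step (n : ℕ) :
    wallis (n + 2) / ((n + 2 : ℕ) + 1) =
      (n + 1) ^ 2 / ((n + 2) * (n + 3)) * (wallis n / (n + 1)) := by
  rw [wallis]; push_cast; field_simp; ring

lemma isingTerm_two_step (I : ℕ → ℝ)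
    (hrec : ∀ n, 3 ≤ n → I n = ((n : ℝ) - 2) ^ 2 * (4 * π ^ 2) * I (n - 2)) (n : ℕ) :
    I (n + 2 + 1) / ((n + 2 + 1).factorial * (2 * π) ^ (n + 2 + 1)) =
      (n + 1) ^ 2 / ((n + 2) * (n + 3)) *
        (I (n + 1) / ((n + 1).factorial * (2 * π) ^ (n + 1))) := by
  rw [hrec (n + 2 + 1) (by omega), show n + 2 + 1 - 2 = n + 1 by omega,
    Nat.factorial_succ, Nat.factorial_succ (n + 1)]
  push_cast
  field_simp
  ring

/-- The series `∑_{n≥1} Iₙ/(n! (2π)ⁿ)` of the Ising intermediate-state integrals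
(`I₁ = 1`, `I₂ = -4`, `Iₙ = (n-2)² · 4π² · I_{n-2}` for `n ≥ 3`) converges
absolutely and equals `1/8`, so that `Δ = 1/16`. -/
theorem ising_delta_sum (I : ℕ → ℝ) (h1 : I 1 = 1) (h2 : I 2 = -4)
    (hrec : ∀ n, 3 ≤ n → I n = ((n : ℝ) - 2) ^ 2 * (4 * π ^ 2) * I (n - 2)) :
    (Summable fun n : ℕ => |I (n + 1) / (Nat.factorial (n + 1) * (2 * π) ^ (n + 1))|) ∧
    ∑' n : ℕ, I (n + 1) / (Nat.factorial (n + 1) * (2 * π) ^ (n + 1)) = 1 / 8 := by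
  set a : ℕ → ℝ := fun n => I (n + 1) / (Nat.factorial (n + 1) * (2 * π) ^ (n + 1))
  have hab := mul_eq_mul_of_two_step (f := a) (g := fun n => wallis n / (n + 1))
    (isingTerm_two_step I hrec) wallis_div_two_step
  have ha0 : a 0 = 1 / (2 * π) := by simp [a, h1]
  have ha1 : a 1 = -1 / (2 * π ^ 2) := by simp [a, h2, Nat.factorial]; ring
  have ha_even (k : ℕ) : a (2 * k) = wallis (2 * k) / ((2 * k : ℕ) + 1) / (2 * π) := by
    simpa [wallis, ha0, div_eq_mul_inv] using hab 0 k
  have ha_odd (k : ℕ) :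
      a (2 * k + 1) = -(wallis (2 * k + 1) / ((2 * k + 1 : ℕ) + 1) / π ^ 2) := by
    have := hab 1 k
    rw [ha1] at this
    simp only [wallis, Nat.cast_one] at this
    field_simp at this ⊢
    linarith
  obtain ⟨heven, hodd⟩ := hasSum_wallis_div_even_odd
  have hsum := ((heven.div_const _).congr_fun ha_even).even_add_odd
    ((hodd.div_const _).neg.congr_fun ha_odd)
  rw [show π / 2 / (2 * π) + -(π ^ 2 / 8 / π ^ 2) = 1 / 8 by field_simp; ring] at hsum
  exact ⟨summable_abs_iff.mpr hsum.summable, hsum.tsum_eq⟩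
end

section
/- Exponential formula: let a : N -> Q with a_0 = 0, and for each n >= 0 define b_n = sum over set partitions pi of {1, ..., n} of the product over blocks B of pi of a_{|B|} (with b_0 = 1). Then, as an identity of formal power series over Q, sum over n of b_n * x^n / n! = exp( sum over n >= 1 of a_n * x^n / n! ). -/
/-- The finite set of all set partitions of a finite set `J`: collections of
nonempty, pairwise disjoint subsets of `J` whose union is `J`. -/
def setPartitionsOf {α : Type*} [DecidableEq α] (J : Finset α) :
    Finset (Finset (Finset α)) :=
  J.powerset.powerset.filter fun P =>
    ∅ ∉ P ∧ P.sup id = J ∧ ∀ B ∈ P, ∀ C ∈ P, B ≠ C → Disjoint B C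

/-- `partitionSum a n = ∑_{set partitions π of {1,…,n}} ∏_{B ∈ π} a_{|B|}`. -/
def partitionSum (a : ℕ → ℚ) (n : ℕ) : ℚ :=
  ∑ P ∈ setPartitionsOf (Finset.univ : Finset (Fin n)), ∏ B ∈ P, a B.card

/-- The exponential of a formal power series `F` with zero constant term,
namely `∑_{k} F^k / k!`; since the coefficient of `xⁿ` in `F^k` vanishes for
`k > n`, the `n`-th coefficient is the finite sum `∑_{k ≤ n} coeff n (F^k)/k!`. -/
noncomputable def expOfSeries (F : PowerSeries ℚ) : PowerSeries ℚ :=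
  PowerSeries.mk fun n =>
    ∑ k ∈ Finset.range (n + 1), PowerSeries.coeff (R := ℚ) n (F ^ k) / Nat.factorial k

/-!
Splitting off the block that contains a fixed point shows that
`bₙ₊₁ = ∑ₘ (n choose m) aₘ₊₁ bₙ₋ₘ`, with `b₀ = 1`, and this holds over any finite ground set,
so it determines the partition sums. On the other side, `E = exp ∘ F` satisfies `E' = F' E`
by the chain rule, and comparing coefficients shows that `n! [xⁿ] E` obeys the same
recursion with the same initial value.
-/

open Finset PowerSeries Nat

namespace PowerSeries

theorem coeff_pow_eq_zero_of_lt {R : Type*} [CommSemiring R] {F : R⟦X⟧}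
    (hF : constantCoeff F = 0) {n k : ℕ} (hk : n < k) : coeff n (F ^ k) = 0 :=
  X_pow_dvd_iff.mp (pow_dvd_pow_of_dvd (X_dvd_iff.mpr hF) k) n hk

end PowerSeries

theorem expOfSeries_eq_subst {F : ℚ⟦X⟧} (hF : constantCoeff F = 0) :
    expOfSeries F = (exp ℚ).subst F := by
  ext n
  rw [expOfSeries, coeff_mk, coeff_subst' (HasSubst.of_constantCoeff_zero' hF),
    finsum_eq_sum_of_support_subset (s := range (n + 1))]
  · refine sum_congr rfl fun k _ => ?_
    simp [div_eq_inv_mul]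
  · intro k hk
    rw [Function.mem_support] at hk
    rw [coe_range, Set.mem_Iio]
    by_contra! h
    exact hk (by rw [coeff_pow_eq_zero_of_lt hF (by omega), smul_zero])

theorem derivative_expOfSeries {F : ℚ⟦X⟧} (hF : constantCoeff F = 0) :
    d⁄dX ℚ (expOfSeries F) = d⁄dX ℚ F * expOfSeries F := by
  rw [expOfSeries_eq_subst hF, derivative_subst (HasSubst.of_constantCoeff_zero' hF),
    derivative_exp, mul_comm]

theorem factorial_mul_coeff_succ_of_derivative_eq {R : Type*} [CommSemiring R] {F G : R⟦X⟧}
    (h : d⁄dX R G = d⁄dX R F * G) (n : ℕ) :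
    ((n + 1)! : R) * coeff (n + 1) G = ∑ m ∈ range (n + 1),
      (n.choose m : R) * ((m + 1)! * coeff (m + 1) F) * ((n - m)! * coeff (n - m) G) := by
  have hn := congrArg (fun H => (n ! : R) * coeff n H) h
  simp only [coeff_derivative, coeff_mul, mul_sum, Nat.sum_antidiagonal_eq_sum_range_succ_mk] at hn
  rw [factorial_succ, cast_mul, mul_comm _ (n ! : R), mul_assoc, mul_comm ((n + 1 : ℕ) : R),
    cast_succ, hn]
  refine sum_congr rfl fun m hm => ?_
  rw [← choose_mul_factorial_mul_factorial (mem_range_succ_iff.mp hm), factorial_succ]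
  push_cast
  ring

section SetPartitions

variable {α : Type*} [DecidableEq α] {J B C : Finset α} {P Q : Finset (Finset α)} {x : α}

theorem mem_setPartitionsOf :
    P ∈ setPartitionsOf J ↔
      ∅ ∉ P ∧ P.sup id = J ∧ ∀ B ∈ P, ∀ C ∈ P, B ≠ C → Disjoint B C := by
  refine ⟨fun h => (mem_filter.mp h).2, fun h => mem_filter.mpr ⟨?_, h⟩⟩
  exact mem_powerset.mpr fun B hB => mem_powerset.mpr (h.2.1 ▸ le_sup (f := id) hB)

theorem subset_of_mem_setPartitionsOf (hP : P ∈ setPartitionsOf J) (hB : B ∈ P) : B ⊆ J :=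
  (mem_setPartitionsOf.mp hP).2.1 ▸ le_sup (f := id) hB

theorem exists_mem_of_mem_setPartitionsOf (hP : P ∈ setPartitionsOf J) (hx : x ∈ J) :
    ∃ B ∈ P, x ∈ B := by
  rw [← (mem_setPartitionsOf.mp hP).2.1] at hx
  simpa using mem_sup.mp hx

theorem eq_of_mem_setPartitionsOf (hP : P ∈ setPartitionsOf J) (hB : B ∈ P) (hC : C ∈ P)
    (hxB : x ∈ B) (hxC : x ∈ C) : B = C := by
  by_contra hne
  exact disjoint_left.mp ((mem_setPartitionsOf.mp hP).2.2 B hB C hC hne) hxB hxC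

theorem setPartitionsOf_empty : setPartitionsOf (∅ : Finset α) = {∅} := by
  ext P
  refine ⟨fun hP => ?_, fun hP => by simp [mem_singleton.mp hP, mem_setPartitionsOf]⟩
  rw [mem_singleton, eq_empty_iff_forall_notMem]
  intro B hB
  have hB' : B = ∅ := subset_empty.mp (subset_of_mem_setPartitionsOf hP hB)
  exact (mem_setPartitionsOf.mp hP).1 (hB' ▸ hB)

theorem erase_mem_setPartitionsOf_sdiff (hP : P ∈ setPartitionsOf J) (hB : B ∈ P) :
    P.erase B ∈ setPartitionsOf (J \ B) := by
  obtain ⟨hempty, hsup, hdisj⟩ := mem_setPartitionsOf.mp hP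
  refine mem_setPartitionsOf.mpr ⟨fun h => hempty (mem_of_mem_erase h), ?_,
    fun C hC D hD => hdisj C (mem_of_mem_erase hC) D (mem_of_mem_erase hD)⟩
  ext y
  simp only [mem_sup, mem_erase, id_eq, mem_sdiff]
  constructor
  · rintro ⟨C, ⟨hCB, hC⟩, hyC⟩
    exact ⟨subset_of_mem_setPartitionsOf hP hC hyC,
      fun hyB => hCB (eq_of_mem_setPartitionsOf hP hC hB hyC hyB)⟩
  · rintro ⟨hyJ, hyB⟩
    obtain ⟨C, hC, hyC⟩ := exists_mem_of_mem_setPartitionsOf hP hyJ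
    exact ⟨C, ⟨fun h => hyB (h ▸ hyC), hC⟩, hyC⟩

theorem insert_mem_setPartitionsOf (hBJ : B ⊆ J) (hB : B.Nonempty)
    (hQ : Q ∈ setPartitionsOf (J \ B)) : insert B Q ∈ setPartitionsOf J := by
  obtain ⟨hempty, hsup, hdisj⟩ := mem_setPartitionsOf.mp hQ
  have hBdisj : ∀ C ∈ Q, Disjoint B C := fun C hC =>
    disjoint_of_subset_right (subset_of_mem_setPartitionsOf hQ hC) disjoint_sdiff
  refine mem_setPartitionsOf.mpr ⟨?_, ?_, ?_⟩
  · intro h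
    rcases mem_insert.mp h with h | h
    exacts [hB.ne_empty h.symm, hempty h]
  · rw [sup_insert, hsup, id_eq]
    exact union_sdiff_of_subset hBJ
  · intro C hC D hD hne
    rcases mem_insert.mp hC with hCB | hC <;> rcases mem_insert.mp hD with hDB | hD
    · exact absurd (hCB.trans hDB.symm) hne
    · exact hCB ▸ hBdisj D hD
    · exact hDB ▸ (hBdisj C hC).symm
    · exact hdisj C hC D hD hne

theorem notMem_of_mem_setPartitionsOf_sdiff (hB : B.Nonempty)
    (hQ : Q ∈ setPartitionsOf (J \ B)) : B ∉ Q := fun h => by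
  obtain ⟨y, hy⟩ := hB
  exact (mem_sdiff.mp (subset_of_mem_setPartitionsOf hQ h hy)).2 hy

theorem existsUnique_insert_mem_setPartitionsOf (hx : x ∉ J)
    (hP : P ∈ setPartitionsOf (insert x J)) : ∃! T, T ⊆ J ∧ insert x T ∈ P := by
  obtain ⟨B, hB, hxB⟩ := exists_mem_of_mem_setPartitionsOf hP (mem_insert_self x J)
  refine ⟨B.erase x, ⟨?_, by rwa [insert_erase hxB]⟩, ?_⟩
  · simpa [erase_insert hx] using erase_subset_erase x (subset_of_mem_setPartitionsOf hP hB)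
  · rintro T ⟨hTJ, hT⟩
    rw [← eq_of_mem_setPartitionsOf hP hT hB (mem_insert_self x T) hxB,
      erase_insert fun h => hx (hTJ h)]

end SetPartitions

section PartitionSumOn

variable {α R : Type*} [DecidableEq α] [CommSemiring R] (a : ℕ → R)

def partitionSumOn (J : Finset α) : R :=
  ∑ P ∈ setPartitionsOf J, ∏ B ∈ P, a B.card

theorem partitionSum_eq_partitionSumOn (a : ℕ → ℚ) (n : ℕ) :
    partitionSum a n = partitionSumOn a (univ : Finset (Fin n)) := rfl

@[simp]
theorem partitionSumOn_empty : partitionSumOn a (∅ : Finset α) = 1 := by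
  simp [partitionSumOn, setPartitionsOf_empty]

theorem sum_setPartitionsOf_filter_mem {J B : Finset α} (hBJ : B ⊆ J) (hB : B.Nonempty) :
    ∑ P ∈ (setPartitionsOf J).filter (B ∈ ·), ∏ C ∈ P, a C.card =
      a B.card * partitionSumOn a (J \ B) := by
  rw [partitionSumOn, mul_sum]
  refine sum_nbij' (·.erase B) (insert B) ?_ ?_ ?_ ?_ ?_
  · intro P hP
    exact erase_mem_setPartitionsOf_sdiff (mem_filter.mp hP).1 (mem_filter.mp hP).2
  · intro Q hQ
    exact mem_filter.mpr ⟨insert_mem_setPartitionsOf hBJ hB hQ, mem_insert_self B Q⟩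
  · intro P hP
    exact insert_erase (mem_filter.mp hP).2
  · intro Q hQ
    exact erase_insert (notMem_of_mem_setPartitionsOf_sdiff hB hQ)
  · intro P hP
    exact (mul_prod_erase P _ (mem_filter.mp hP).2).symm

/-- Partitions of `insert x J` are sorted by the block `insert x T` that contains `x`. -/
theorem partitionSumOn_insert {x : α} {J : Finset α} (hx : x ∉ J) :
    partitionSumOn a (insert x J) =
      ∑ T ∈ J.powerset, a (T.card + 1) * partitionSumOn a (J \ T) := by
  have hblock : ∀ P ∈ setPartitionsOf (insert x J), ∏ B ∈ P, a B.card =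
      ∑ T ∈ J.powerset, if insert x T ∈ P then ∏ B ∈ P, a B.card else 0 := by
    intro P hP
    obtain ⟨T₀, ⟨hT₀J, hT₀⟩, huniq⟩ := existsUnique_insert_mem_setPartitionsOf hx hP
    rw [sum_eq_single_of_mem T₀ (mem_powerset.mpr hT₀J)
      fun T hT hne => if_neg fun h => hne (huniq T ⟨mem_powerset.mp hT, h⟩), if_pos hT₀]
  calc partitionSumOn a (insert x J)
      = ∑ T ∈ J.powerset, ∑ P ∈ (setPartitionsOf (insert x J)).filter (insert x T ∈ ·),
          ∏ B ∈ P, a B.card := by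
        rw [partitionSumOn, sum_congr rfl hblock, sum_comm]
        simp only [sum_filter]
    _ = _ := by
        refine sum_congr rfl fun T hT => ?_
        have hxT : x ∉ T := fun h => hx (mem_powerset.mp hT h)
        rw [sum_setPartitionsOf_filter_mem a (insert_subset_insert x (mem_powerset.mp hT))
          (insert_nonempty x T), card_insert_of_notMem hxT, insert_sdiff_insert,
          sdiff_insert_of_notMem hx]

theorem partitionSumOn_eq_of_recursion {c : ℕ → R} (h0 : c 0 = 1)
    (hsucc : ∀ n, c (n + 1) = ∑ m ∈ range (n + 1), (n.choose m : R) * a (m + 1) * c (n - m))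
    (J : Finset α) : partitionSumOn a J = c J.card := by
  induction J using Finset.strongInduction with
  | H J ih =>
  rcases J.eq_empty_or_nonempty with rfl | ⟨x, hx⟩
  · rw [partitionSumOn_empty, card_empty, h0]
  have hJ : insert x (J.erase x) = J := insert_erase hx
  rw [← hJ, partitionSumOn_insert a (notMem_erase x J), card_insert_of_notMem (notMem_erase x J),
    hsucc]
  calc ∑ T ∈ (J.erase x).powerset, a (#T + 1) * partitionSumOn a (J.erase x \ T)
      = ∑ T ∈ (J.erase x).powerset, a (#T + 1) * c (#(J.erase x) - #T) := by
        refine sum_congr rfl fun T hT => ?_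
        rw [ih _ (sdiff_subset.trans_ssubset (erase_ssubset hx)),
          card_sdiff_of_subset (mem_powerset.mp hT)]
    _ = _ := by simp only [sum_powerset_apply_card (fun m => a (m + 1) * c (#(J.erase x) - m)),
        nsmul_eq_mul, mul_assoc]

/-- Exponential formula: if `a₀ = 0` and
`bₙ = ∑_{set partitions π of {1,…,n}} ∏_{B ∈ π} a_{|B|}` (with `b₀ = 1`), then as
formal power series over `ℚ`: `∑ₙ bₙ xⁿ/n! = exp (∑_{n≥1} aₙ xⁿ/n!)`. -/
theorem exponential_formula (a : ℕ → ℚ) (ha : a 0 = 0) :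
    (PowerSeries.mk fun n => partitionSum a n / Nat.factorial n) =
      expOfSeries (PowerSeries.mk fun n => a n / Nat.factorial n) := by
  set F : ℚ⟦X⟧ := mk fun n => a n / (n !)
  have hF0 : constantCoeff F = 0 := by simp [F, ha]
  have hFcoeff (m : ℕ) : (m ! : ℚ) * coeff m F = a m := by
    rw [coeff_mk, mul_div_cancel₀ _ (by positivity)]
  have hrec := factorial_mul_coeff_succ_of_derivative_eq (derivative_expOfSeries hF0)
  ext n
  rw [coeff_mk, partitionSum_eq_partitionSumOn,
    partitionSumOn_eq_of_recursion a (c := fun n => n ! * coeff n (expOfSeries F))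
      (by simp [expOfSeries]) (fun n => by simp only [hrec, hFcoeff]),
    Finset.card_univ, Fintype.card_fin, mul_div_cancel_left₀ _ (by positivity)]
end PartitionSumOn
end

section
/- Symmetry and periodicity of the breather K-function (part of Theorem 1): fix n >= 2, nu in R, and a function p : C^n x {0,1}^n -> C. Define K(theta) = sum over l in {0,1}^n of (-1)^{l_1 + ... + l_n} * ( product over 1 <= i < j <= n of (1 + (l_i - l_j)*i*sin(pi*nu)/sinh(theta_i - theta_j)) ) * p(theta, l), for theta in C^n with sinh(theta_i - theta_j) != 0 for all i < j. Then: (a) if p is invariant under the simultaneous exchange of (theta_i, l_i) and (theta_j, l_j) for all i, j, then K(theta) is a symmetric function of (theta_1, ..., theta_n); (b) if moreover p(theta_1 - 2*pi*i, theta_2, ..., theta_n, l) = p(theta_1, ..., theta_n, l), then K(theta_1 - 2*pi*i, theta_2, ..., theta_n) = K(theta_1, ..., theta_n). -/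
open scoped Real
open Finset Function

/-!
`K` is a sum over `l ∈ {0,1}ⁿ` of a sign, a product of pair factors and `p(θ, l)`. Permuting `θ`
is undone by permuting `l` the same way: the sign only sees `∑ lᵢ`, the pair factor is symmetric
under `(θᵢ, lᵢ) ↔ (θⱼ, lⱼ)` because `sinh` is odd, and the product over pairs `i < j` of a symmetric
factor is invariant under relabelling. Shifting one `θₖ` by `2πi` changes each `sinh (θᵢ - θⱼ)` by
a multiple of its period `2πi`.
-/

theorem Finset.prod_filter_lt_comp_perm {α M : Type*} [Fintype α] [LinearOrder α] [CommMonoid M]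
    (σ : Equiv.Perm α) {f : α → α → M} (hf : ∀ a b, f a b = f b a) :
    ∏ q ∈ univ.filter (fun q : α × α => q.1 < q.2), f (σ q.1) (σ q.2) =
      ∏ q ∈ univ.filter (fun q : α × α => q.1 < q.2), f q.1 q.2 := by
  have sort_perm (τ : Equiv.Perm α) {q : α × α} (hq : q.1 < q.2) :
      (min (τ.symm (min (τ q.1) (τ q.2))) (τ.symm (max (τ q.1) (τ q.2))),
        max (τ.symm (min (τ q.1) (τ q.2))) (τ.symm (max (τ q.1) (τ q.2)))) = q := by
    rcases le_total (τ q.1) (τ q.2) with h | h <;> simp [h, hq.le]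
  refine prod_nbij' (fun q => (min (σ q.1) (σ q.2), max (σ q.1) (σ q.2)))
    (fun r => (min (σ.symm r.1) (σ.symm r.2), max (σ.symm r.1) (σ.symm r.2))) ?_ ?_ ?_ ?_ ?_
  · intro q hq
    rw [mem_filter] at hq ⊢
    exact ⟨mem_univ _, min_lt_max.2 (σ.injective.ne hq.2.ne)⟩
  · intro r hr
    rw [mem_filter] at hr ⊢
    exact ⟨mem_univ _, min_lt_max.2 (σ.symm.injective.ne hr.2.ne)⟩
  · intro q hq
    exact sort_perm σ (mem_filter.1 hq).2
  · intro r hr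
    simpa using sort_perm σ.symm (mem_filter.1 hr).2
  · intro q _
    rcases le_total (σ q.1) (σ q.2) with h | h <;> simp [h, hf (σ q.1)]

theorem Complex.sinh_update_sub_two_pi_I_sub {ι : Type*} [DecidableEq ι] (θ : ι → ℂ) (k a b : ι) :
    Complex.sinh (update θ k (θ k - 2 * π * Complex.I) a - update θ k (θ k - 2 * π * Complex.I) b)
      = Complex.sinh (θ a - θ b) := by
  by_cases ha : a = k <;> by_cases hb : b = k
  · simp [ha, hb]
  · rw [ha, update_self, update_of_ne hb, sub_right_comm, Complex.sinh_periodic.sub_eq]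
  · rw [hb, update_self, update_of_ne ha, sub_sub_eq_add_sub, add_sub_right_comm,
      Complex.sinh_periodic]
  · rw [update_of_ne ha, update_of_ne hb]

namespace Breather

variable {n : ℕ} (ν : ℝ)

noncomputable def pairFactor (θ : Fin n → ℂ) (l : Fin n → Fin 2) (a b : Fin n) : ℂ :=
  1 + (((l a : ℕ) : ℂ) - ((l b : ℕ) : ℂ)) * Complex.I * (Real.sin (π * ν) : ℂ) /
    Complex.sinh (θ a - θ b)

noncomputable def kFunction (p : (Fin n → ℂ) → (Fin n → Fin 2) → ℂ) (θ : Fin n → ℂ) : ℂ :=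
  ∑ l : Fin n → Fin 2, (-1 : ℂ) ^ (∑ i, (l i : ℕ)) *
    (∏ q ∈ univ.filter (fun q : Fin n × Fin n => q.1 < q.2), pairFactor ν θ l q.1 q.2) * p θ l

theorem pairFactor_comm (θ : Fin n → ℂ) (l : Fin n → Fin 2) (a b : Fin n) :
    pairFactor ν θ l a b = pairFactor ν θ l b a := by
  rw [pairFactor, pairFactor, ← neg_sub (θ a), Complex.sinh_neg]
  ring

theorem kFunction_comp_perm {p : (Fin n → ℂ) → (Fin n → Fin 2) → ℂ} (σ : Equiv.Perm (Fin n))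
    (hp : ∀ θ l, p (θ ∘ σ) (l ∘ σ) = p θ l) (θ : Fin n → ℂ) :
    kFunction ν p (θ ∘ σ) = kFunction ν p θ := by
  rw [kFunction, ← Equiv.sum_comp (σ.symm.arrowCongr (Equiv.refl (Fin 2)))]
  refine sum_congr rfl fun l _ => ?_
  have hl : σ.symm.arrowCongr (Equiv.refl (Fin 2)) l = l ∘ σ := by
    ext; simp
  rw [hl, hp, comp_def, Equiv.sum_comp σ (fun i => (l i : ℕ))]
  congr 2
  exact prod_filter_lt_comp_perm σ (pairFactor_comm ν θ l)

theorem kFunction_update_sub_two_pi_I {p : (Fin n → ℂ) → (Fin n → Fin 2) → ℂ} (k : Fin n)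
    (hp : ∀ θ l, p (update θ k (θ k - 2 * π * Complex.I)) l = p θ l) (θ : Fin n → ℂ) :
    kFunction ν p (update θ k (θ k - 2 * π * Complex.I)) = kFunction ν p θ := by
  refine sum_congr rfl fun l _ => ?_
  rw [hp]
  congr 2
  refine prod_congr rfl fun q _ => ?_
  rw [pairFactor, pairFactor, Complex.sinh_update_sub_two_pi_I_sub]

end Breather

/-- Symmetry and `2πi`-periodicity of the breather K-function
`K(θ) = ∑_{l ∈ {0,1}ⁿ} (-1)^{∑ lᵢ} ∏_{i<j} (1 + (lᵢ-lⱼ) i sin(πν)/sinh(θᵢ-θⱼ)) p(θ,l)`: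
(a) if `p` is invariant under simultaneous exchange of `(θᵢ,lᵢ)` and `(θⱼ,lⱼ)`,
then `K` is symmetric; (b) if moreover `p` is `2πi`-periodic in `θ₁`, then so
is `K`. -/
theorem breather_K_function_symmetry_periodicity (n : ℕ) (hn : 2 ≤ n) (ν : ℝ)
    (p : (Fin n → ℂ) → (Fin n → Fin 2) → ℂ) (K : (Fin n → ℂ) → ℂ)
    (hK : ∀ θ : Fin n → ℂ, K θ =
      ∑ l : Fin n → Fin 2, (-1 : ℂ) ^ (∑ i, (l i : ℕ)) *
        (∏ q ∈ Finset.univ.filter (fun q : Fin n × Fin n => q.1 < q.2),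
          (1 + (((l q.1 : ℕ) : ℂ) - ((l q.2 : ℕ) : ℂ)) * Complex.I * (Real.sin (π * ν) : ℂ) /
            Complex.sinh (θ q.1 - θ q.2))) * p θ l) :
    ((∀ (i j : Fin n) (θ : Fin n → ℂ) (l : Fin n → Fin 2),
        p (θ ∘ Equiv.swap i j) (l ∘ Equiv.swap i j) = p θ l) →
      ∀ θ : Fin n → ℂ, (∀ i j, i ≠ j → Complex.sinh (θ i - θ j) ≠ 0) →
        ∀ i j : Fin n, K (θ ∘ Equiv.swap i j) = K θ) ∧
    ((∀ (i j : Fin n) (θ : Fin n → ℂ) (l : Fin n → Fin 2),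
        p (θ ∘ Equiv.swap i j) (l ∘ Equiv.swap i j) = p θ l) →
      (∀ (θ : Fin n → ℂ) (l : Fin n → Fin 2),
        p (Function.update θ ⟨0, by omega⟩ (θ ⟨0, by omega⟩ - 2 * (π : ℂ) * Complex.I)) l
          = p θ l) →
      ∀ θ : Fin n → ℂ,
        K (Function.update θ ⟨0, by omega⟩ (θ ⟨0, by omega⟩ - 2 * (π : ℂ) * Complex.I)) = K θ) := by
  obtain rfl : K = Breather.kFunction ν p := funext hK
  exact ⟨fun hp θ _ i j => Breather.kFunction_comp_perm ν (Equiv.swap i j) (hp i j) θ,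
    fun _ hp => Breather.kFunction_update_sub_two_pi_I ν _ hp⟩
end
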